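/- arXiv:1903.03818 — 6 statements merged into one kernel-verified Lean document; each statement's English description precedes it below -/
import Mathlib

section
/- For any finite group G and prime p, the p-part of |G| divides the number of p-singular elements of G, i.e. |G|_p divides |{g ∈ G : g^(|G|_p) = 1}|. -/
/-!
Write `|G| = a * b` with `a = |G|_p`. By the Chinese remainder theorem every `g` is uniquely a
commuting product `x * y` with `x ^ a = 1` and `y ^ b = 1`, so `|G|` is the sum, over the
`p`-regular `y`, of the number of `p`-singular elements of `C_G(y)`. A central `y` contributes
the number `s` of `p`-singular elements of `G`; the conjugacy class of a non-central `y` has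
`|G : C_G(y)|` elements, so by induction on `|G|` it contributes a multiple of `|G|_p`. The
number of central `p`-regular elements is prime to `p` by Cauchy's theorem, hence `|G|_p ∣ s`.
-/

open Subgroup MulAction

namespace Nat.Coprime

variable {a b : ℕ} (hab : a.Coprime b)

noncomputable def projExp : ℕ := Nat.chineseRemainder hab 1 0

theorem projExp_modEq_one : hab.projExp ≡ 1 [MOD a] := (Nat.chineseRemainder hab 1 0).2.1

theorem projExp_modEq_zero : hab.projExp ≡ 0 [MOD b] := (Nat.chineseRemainder hab 1 0).2.2

theorem projExp_add_projExp_symm_modEq_one : hab.projExp + hab.symm.projExp ≡ 1 [MOD a * b] :=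
  (Nat.modEq_and_modEq_iff_modEq_mul hab).mp
    ⟨(hab.projExp_modEq_one.add hab.symm.projExp_modEq_zero :),
      (hab.projExp_modEq_zero.add hab.symm.projExp_modEq_one :)⟩

variable {M : Type*} [Monoid M]

theorem pow_projExp_of_pow_left_eq_one {x : M} (hx : x ^ a = 1) : x ^ hab.projExp = x := by
  rw [pow_eq_pow_of_modEq hab.projExp_modEq_one hx, pow_one]

theorem pow_projExp_of_pow_right_eq_one {y : M} (hy : y ^ b = 1) : y ^ hab.projExp = 1 := by
  rw [pow_eq_pow_of_modEq hab.projExp_modEq_zero hy, pow_zero]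

theorem pow_projExp_mul_pow_projExp_symm {g : M} (hg : g ^ (a * b) = 1) :
    g ^ hab.projExp * g ^ hab.symm.projExp = g := by
  rw [← pow_add, pow_eq_pow_of_modEq hab.projExp_add_projExp_symm_modEq_one hg, pow_one]

end Nat.Coprime

theorem Nat.ordProj_mul_dvd_mul_of_ordProj_dvd {p c d e : ℕ} (hcd : c * d ≠ 0)
    (h : ordProj[p] d ∣ e) : ordProj[p] (c * d) ∣ c * e := by
  rw [Nat.ordProj_mul p (left_ne_zero_of_mul hcd) (right_ne_zero_of_mul hcd)]
  exact mul_dvd_mul (Nat.ordProj_dvd c p) h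

open scoped IsMulCommutative in
theorem Nat.Prime.not_dvd_card_pow_eq_one {A : Type*} [Group A] [IsMulCommutative A] [Finite A]
    {p b : ℕ} (hp : p.Prime) (hpb : ¬ p ∣ b) : ¬ p ∣ Nat.card {y : A // y ^ b = 1} := by
  intro hdvd
  have := Fact.mk hp
  obtain ⟨⟨y, hy⟩, hyp⟩ :=
    exists_prime_orderOf_dvd_card' (G := (powMonoidHom b : A →* A).ker) p hdvd
  rw [Subgroup.orderOf_mk] at hyp
  exact hpb (hyp ▸ orderOf_dvd_of_pow_eq_one hy)

theorem MulAction.dvd_sum_of_dvd_card_orbit_mul {G α : Type*} [Group G] [MulAction G α]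
    [Fintype α] {s : Finset α} (hs : ∀ g : G, ∀ x ∈ s, g • x ∈ s) {f : α → ℕ}
    (hf : ∀ (g : G) x, f (g • x) = f x) {n : ℕ}
    (h : ∀ x ∈ s, n ∣ Nat.card (orbit G x) * f x) :
    n ∣ ∑ x ∈ s, f x := by
  classical
  rw [← Finset.sum_fiberwise s (Quotient.mk (orbitRel G α))]
  refine Finset.dvd_sum fun ω _ => ?_
  rcases Finset.eq_empty_or_nonempty {y ∈ s | Quotient.mk _ y = ω} with hω | ⟨x, hx⟩
  · rw [hω, Finset.sum_empty]
    exact dvd_zero n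
  rw [Finset.mem_filter] at hx
  have hfiber : {y ∈ s | Quotient.mk _ y = ω} = (orbit G x).toFinset := by
    ext y
    simp only [Finset.mem_filter, Set.mem_toFinset, ← hx.2, Quotient.eq, orbitRel_apply]
    refine ⟨And.right, fun hy => ⟨?_, hy⟩⟩
    obtain ⟨g, rfl⟩ := hy
    exact hs g x hx.1
  rw [hfiber, Finset.sum_congr rfl fun y hy => ?_, Finset.sum_const, smul_eq_mul,
    Set.toFinset_card, ← Nat.card_eq_fintype_card]
  · exact h x hx.1
  · obtain ⟨g, rfl⟩ := Set.mem_toFinset.mp hy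
    exact hf g x

section Group

variable {G : Type*} [Group G]

noncomputable def sigmaCommutePowEqOneEquiv {a b : ℕ} (hab : a.Coprime b)
    (hG : ∀ g : G, g ^ (a * b) = 1) :
    (Σ y : {y : G // y ^ b = 1}, {x : G // x ^ a = 1 ∧ Commute x y}) ≃ G where
  toFun s := s.2 * s.1
  invFun g :=
    ⟨⟨g ^ hab.symm.projExp, by
        rw [pow_right_comm,
          hab.symm.pow_projExp_of_pow_right_eq_one (by rw [← pow_mul, mul_comm, hG])]⟩,
      ⟨g ^ hab.projExp, by
        rw [pow_right_comm, hab.pow_projExp_of_pow_right_eq_one (by rw [← pow_mul, hG])],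
        (Commute.refl g).pow_pow _ _⟩⟩
  left_inv := by
    rintro ⟨⟨y, hy⟩, ⟨x, hx, hxy⟩⟩
    refine Sigma.subtype_ext (Subtype.ext ?_) ?_ <;> simp only [hxy.mul_pow]
    · rw [hab.symm.pow_projExp_of_pow_right_eq_one hx,
        hab.symm.pow_projExp_of_pow_left_eq_one hy, one_mul]
    · rw [hab.pow_projExp_of_pow_left_eq_one hx, hab.pow_projExp_of_pow_right_eq_one hy, mul_one]
  right_inv g := hab.pow_projExp_mul_pow_projExp_symm (hG g)

theorem card_pow_eq_one_commute_conj (n : ℕ) (g y : G) :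
    Nat.card {x : G // x ^ n = 1 ∧ Commute x (g * y * g⁻¹)} =
      Nat.card {x : G // x ^ n = 1 ∧ Commute x y} := by
  refine Nat.card_congr (Equiv.subtypeEquiv (MulAut.conj g).toEquiv fun x => ?_).symm
  simp only [MulEquiv.toEquiv_eq_coe, EquivLike.coe_coe, ← MulAut.conj_apply, ← map_pow,
    map_eq_one_iff _ (MulAut.conj g).injective, commute_map_iff (MulAut.conj g).injective]

theorem card_eq_card_mul_add_sum_noncenter [Fintype G] [DecidableEq G] {a b : ℕ}
    (hab : a.Coprime b) (hG : ∀ g : G, g ^ (a * b) = 1) :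
    Nat.card G = Nat.card {y : center G // y ^ b = 1} * Nat.card {x : G // x ^ a = 1} +
      ∑ y ∈ {y : G | y ^ b = 1 ∧ y ∉ center G},
        Nat.card {x : G // x ^ a = 1 ∧ Commute x y} := by
  set f : G → ℕ := fun y => Nat.card {x : G // x ^ a = 1 ∧ Commute x y}
  set S : Finset G := {y | y ^ b = 1}
  have hcard : Nat.card G = ∑ y ∈ S, f y := by
    rw [← Nat.card_congr (sigmaCommutePowEqOneEquiv hab hG), Nat.card_sigma]
    exact (Finset.sum_subtype S (by simp [S]) f).symm
  have hcentral : ∑ y ∈ S with y ∈ center G, f y =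
      Nat.card {y : center G // y ^ b = 1} * Nat.card {x : G // x ^ a = 1} := by
    rw [Finset.sum_congr rfl fun y hy => ?_, Finset.sum_const, smul_eq_mul]
    · congr 1
      rw [Finset.filter_filter, ← Fintype.card_subtype, ← Nat.card_eq_fintype_card]
      refine Nat.card_congr <| ((Equiv.subtypeEquivRight fun y => ?_).trans <|
        (Equiv.subtypeSubtypeEquivSubtypeInter (· ∈ center G) _).trans
          (Equiv.subtypeEquivRight fun _ => and_comm)).symm
      rw [← OneMemClass.coe_eq_one, Subgroup.coe_pow]
    · exact Nat.card_congr <| Equiv.subtypeEquivRight fun x =>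
        and_iff_left (mem_center_iff.mp (Finset.mem_filter.mp hy).2 x)
  rw [hcard, ← Finset.sum_filter_add_sum_filter_not S (· ∈ center G), hcentral,
    Finset.filter_filter]

theorem card_orbit_conjAct_mul_card_centralizer (y : G) :
    Nat.card (orbit (ConjAct G) y) * Nat.card (centralizer {y}) = Nat.card G := by
  rw [nat_card_centralizer_nat_card_stabilizer, Nat.card_coe_set_eq, ← index_stabilizer,
    mul_comm, card_mul_index]
  rfl

section Finite

variable [Finite G]

theorem card_centralizer_lt_of_notMem_center {y : G} (hy : y ∉ center G) :
    Nat.card (centralizer {y}) < Nat.card G := by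
  have hne : centralizer {y} ≠ ⊤ := fun h =>
    hy (Set.singleton_subset_iff.mp (centralizer_eq_top_iff_subset.mp h))
  exact (card_le_card_group _).lt_of_ne (mt (card_eq_iff_eq_top _).mp hne)

theorem pow_ordProj_eq_one_iff_of_card_dvd {p n : ℕ} (hp : p.Prime) (hn : n ≠ 0)
    (hGn : Nat.card G ∣ n) (x : G) :
    x ^ ordProj[p] n = 1 ↔ x ^ ordProj[p] (Nat.card G) = 1 := by
  refine ⟨fun hx => ?_, fun hx => ?_⟩
  · obtain ⟨j, -, hj⟩ := (Nat.dvd_prime_pow hp).mp (orderOf_dvd_of_pow_eq_one hx)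
    rw [← orderOf_dvd_iff_pow_eq_one, hj, ← hp.pow_dvd_iff_dvd_ordProj Nat.card_pos.ne', ← hj]
    exact orderOf_dvd_natCard x
  · obtain ⟨c, hc⟩ := Nat.ordProj_dvd_ordProj_of_dvd hn hGn p
    rw [hc, pow_mul, hx, one_pow]

theorem Subgroup.card_pow_ordProj_card_eq_one {p : ℕ} (hp : p.Prime) (H : Subgroup G) :
    Nat.card {x : H // x ^ ordProj[p] (Nat.card H) = 1} =
      Nat.card {x : G // x ^ ordProj[p] (Nat.card G) = 1 ∧ x ∈ H} := by
  refine Nat.card_congr <| (Equiv.subtypeEquivRight fun x : H => ?_).trans <|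
    (Equiv.subtypeSubtypeEquivSubtypeInter (· ∈ H) _).trans
      (Equiv.subtypeEquivRight fun _ => and_comm)
  rw [← pow_ordProj_eq_one_iff_of_card_dvd hp Nat.card_pos.ne' (card_subgroup_dvd_card H),
    ← OneMemClass.coe_eq_one, Subgroup.coe_pow]

end Finite

theorem ordProj_dvd_sum_card_pow_eq_one_commute_noncenter [Fintype G] [DecidableEq G]
    {p : ℕ} (hp : p.Prime) (b : ℕ)
    (hC : ∀ y ∉ center G, ordProj[p] (Nat.card (centralizer {y})) ∣
      Nat.card {x : centralizer {y} // x ^ ordProj[p] (Nat.card (centralizer {y})) = 1}) :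
    ordProj[p] (Nat.card G) ∣ ∑ y ∈ {y : G | y ^ b = 1 ∧ y ∉ center G},
      Nat.card {x : G // x ^ ordProj[p] (Nat.card G) = 1 ∧ Commute x y} := by
  refine dvd_sum_of_dvd_card_orbit_mul (G := ConjAct G) (fun c y hy => ?_)
    (fun c y => ?_) fun y hy => ?_
  · obtain ⟨hyb, hyZ⟩ := (Finset.mem_filter.mp hy).2
    rw [ConjAct.smul_def, Finset.mem_filter]
    refine ⟨Finset.mem_univ _, by rw [conj_pow, hyb, mul_one, mul_inv_cancel], fun hZ => hyZ ?_⟩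
    simpa [mul_assoc] using
      (center G).normal_of_characteristic.conj_mem' _ hZ (ConjAct.ofConjAct c)
  · rw [ConjAct.smul_def]
    exact card_pow_eq_one_commute_conj _ _ y
  · have hyZ := (Finset.mem_filter.mp hy).2.2
    have key := Nat.ordProj_mul_dvd_mul_of_ordProj_dvd
      (by rw [card_orbit_conjAct_mul_card_centralizer]; exact Nat.card_pos.ne') (hC y hyZ)
    rw [card_orbit_conjAct_mul_card_centralizer, card_pow_ordProj_card_eq_one hp] at key
    convert key using 2
    exact Nat.card_congr <| Equiv.subtypeEquivRight fun x =>
      and_congr_right' mem_centralizer_singleton_iff.symm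

theorem ordProj_dvd_card_pow_ordProj_eq_one_of_centralizer [Finite G] {p : ℕ} (hp : p.Prime)
    (hC : ∀ y ∉ center G, ordProj[p] (Nat.card (centralizer {y})) ∣
      Nat.card {x : centralizer {y} // x ^ ordProj[p] (Nat.card (centralizer {y})) = 1}) :
    ordProj[p] (Nat.card G) ∣ Nat.card {x : G // x ^ ordProj[p] (Nat.card G) = 1} := by
  classical
  have := Fintype.ofFinite G
  have hG0 : Nat.card G ≠ 0 := Nat.card_pos.ne'
  have hpCompl := Nat.coprime_ordCompl hp hG0
  have hexp (g : G) : g ^ (ordProj[p] (Nat.card G) * ordCompl[p] (Nat.card G)) = 1 := by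
    rw [Nat.ordProj_mul_ordCompl_eq_self]
    exact pow_card_eq_one'
  have hz : (ordProj[p] (Nat.card G)).Coprime
      (Nat.card {y : center G // y ^ ordCompl[p] (Nat.card G) = 1}) :=
    (hp.coprime_iff_not_dvd.mpr
      (hp.not_dvd_card_pow_eq_one (hp.coprime_iff_not_dvd.mp hpCompl))).pow_left _
  have hnoncentral :=
    ordProj_dvd_sum_card_pow_eq_one_commute_noncenter hp (ordCompl[p] (Nat.card G)) hC
  refine hz.dvd_of_dvd_mul_left ((Nat.dvd_add_left hnoncentral).mp ?_)
  rw [← card_eq_card_mul_add_sum_noncenter (hpCompl.pow_left _) hexp]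
  exact Nat.ordProj_dvd _ _


end Group

/-- For a finite group `G` and prime `p`, the `p`-part `|G|_p` of the order of `G`
divides the number of `p`-singular elements, i.e. elements `g` with `g ^ |G|_p = 1`. -/
theorem pPart_dvd_card_pSingular (G : Type*) [Group G] [Finite G] (p : ℕ)
    (hp : p.Prime) :
    p ^ ((Nat.card G).factorization p) ∣
      Nat.card {g : G | g ^ (p ^ ((Nat.card G).factorization p)) = 1} := by
  induction hn : Nat.card G using Nat.strong_induction_on generalizing G with
  | _ n ih =>
    subst hn
    exact ordProj_dvd_card_pow_ordProj_eq_one_of_centralizer hp fun y hy =>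
      ih _ (card_centralizer_lt_of_notMem_center hy) (centralizer {y}) rfl
end

section
/- Let K = GL(n, F_q) where q is a power of the prime p. Then the number of p-singular elements of K equals |K|_p^2, the square of the p-part of the order of K. -/
/-!
Over a field of characteristic `p`, `g ↦ g - 1` maps the `p`-singular elements of `GL(n, q)`
bijectively onto the nilpotent `n × n` matrices, so it suffices to show that there are
`q ^ (n * (n - 1))` of the latter (Fine–Herstein); this is the square of the `p`-part
`q ^ (n choose 2)` of `|GL(n, q)|`.

By the Fitting decomposition, an endomorphism of `V = F_q ^ n` is the same as a splitting
`V = U ⊕ W` together with a nilpotent endomorphism of `U` and an automorphism of `W`. A splitting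
with `dim U = d` carries `|GL_d| · |GL_{n-d}|` adapted bases, out of `|GL_n|` bases of `V`, so
counting endomorphisms gives `∑_{d ≤ n} ν_d / |GL_d| = q ^ (n * n) / |GL_n|`, where `ν_d` is
the number of nilpotent `d × d` matrices. Comparing this identity for `n` and `n + 1` gives
`ν_{n+1} = q ^ ((n + 1) * n)`.
-/

open Module LinearMap Submodule

variable {R M : Type*} [Ring R] [AddCommGroup M] [Module R M]

section Unipotent

variable {A : Type*} [Ring A] {p : ℕ}

lemma sub_one_pow_prime_pow (hp : p.Prime) (hpA : (p : A) = 0) (x : A) (k : ℕ) :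
    (x - 1) ^ p ^ k = x ^ p ^ k - 1 := by
  obtain ⟨r, hr⟩ := (Commute.one_right (x - 1)).exists_add_pow_prime_pow_eq hp k
  rw [sub_add_cancel, one_pow, hpA, zero_mul, zero_mul, zero_mul, add_zero] at hr
  rw [hr, add_sub_cancel_right]

lemma Units.exists_orderOf_eq_prime_pow_iff (hp : p.Prime) (hpA : (p : A) = 0) (u : Aˣ) :
    (∃ k, orderOf u = p ^ k) ↔ IsNilpotent ((u : A) - 1) := by
  constructor
  · rintro ⟨k, hk⟩
    refine ⟨p ^ k, ?_⟩
    rw [sub_one_pow_prime_pow hp hpA, ← Units.val_pow_eq_pow_val, ← hk, pow_orderOf_eq_one,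
      Units.val_one, sub_self]
  · rintro ⟨m, hm⟩
    have hpow : u ^ p ^ m = 1 := Units.ext <| by
      rw [Units.val_pow_eq_pow_val, Units.val_one, ← sub_eq_zero,
        ← sub_one_pow_prime_pow hp hpA, pow_eq_zero_of_le (Nat.lt_pow_self hp.one_lt).le hm]
    obtain ⟨k, -, hk⟩ := (Nat.dvd_prime_pow hp).mp (orderOf_dvd_of_pow_eq_one hpow)
    exact ⟨k, hk⟩

noncomputable def unitsPrimePowOrderEquiv (hp : p.Prime) (hpA : (p : A) = 0) :
    {u : Aˣ // ∃ k, orderOf u = p ^ k} ≃ {a : A // IsNilpotent a} where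
  toFun u := ⟨u.1 - 1, (Units.exists_orderOf_eq_prime_pow_iff hp hpA u).mp u.2⟩
  invFun a := ⟨a.2.isUnit_add_one.unit,
    (Units.exists_orderOf_eq_prime_pow_iff hp hpA _).mpr (by simpa using a.2)⟩
  left_inv u := Subtype.ext (Units.ext (by simp))
  right_inv a := Subtype.ext (by simp)

end Unipotent

variable (R M) in
abbrev ComplPair := {c : Submodule R M × Submodule R M // IsCompl c.1 c.2}

namespace ComplPair

variable (c : ComplPair R M)

noncomputable abbrev prodEquiv : (c.1.1 × c.1.2) ≃ₗ[R] M := prodEquivOfIsCompl _ _ c.2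

noncomputable def prodMap : End R c.1.1 × End R c.1.2 →+* End R M :=
  c.prodEquiv.conjRingEquiv.toRingHom.comp (prodMapRingHom R _ _)

lemma prodMap_apply_prodEquiv (x : End R c.1.1 × End R c.1.2) (y : c.1.1 × c.1.2) :
    c.prodMap x (c.prodEquiv y) = c.prodEquiv (x.1 y.1, x.2 y.2) := by
  simp [prodMap]

lemma prodMap_injective : Function.Injective c.prodMap := by
  intro x y hxy
  have key (v : c.1.1 × c.1.2) : (x.1 v.1, x.2 v.2) = (y.1 v.1, y.2 v.2) :=
    c.prodEquiv.injective (by rw [← prodMap_apply_prodEquiv, ← prodMap_apply_prodEquiv, hxy])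
  exact Prod.ext (LinearMap.ext fun u ↦ congrArg Prod.fst (key (u, 0)))
    (LinearMap.ext fun w ↦ congrArg Prod.snd (key (0, w)))

variable {c}

lemma prodMap_pow_apply_prodEquiv (g : End R c.1.1) (h : (End R c.1.2)ˣ) (k : ℕ)
    (y : c.1.1 × c.1.2) :
    (c.prodMap (g, h) ^ k) (c.prodEquiv y) =
      c.prodEquiv ((g ^ k) y.1, ((h ^ k : (End R c.1.2)ˣ) : End R c.1.2) y.2) := by
  rw [← map_pow, Prod.pow_mk, prodMap_apply_prodEquiv, Units.val_pow_eq_pow_val]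

lemma ker_prodMap_pow_le (g : End R c.1.1) (h : (End R c.1.2)ˣ) (k : ℕ) :
    ker (c.prodMap (g, h) ^ k) ≤ c.1.1 := by
  intro x hx
  obtain ⟨y, rfl⟩ := c.prodEquiv.surjective x
  rw [mem_ker, prodMap_pow_apply_prodEquiv, LinearEquiv.map_eq_zero_iff, Prod.mk_eq_zero] at hx
  have hy : y.2 = 0 :=
    ((Module.End.isUnit_iff _).mp (h ^ k).isUnit).injective (by simpa using hx.2)
  simp [hy]

lemma le_range_prodMap_pow (g : End R c.1.1) (h : (End R c.1.2)ˣ) (k : ℕ) :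
    c.1.2 ≤ range (c.prodMap (g, h) ^ k) := by
  intro w hw
  refine ⟨c.prodEquiv (0, (↑(h ^ k)⁻¹ : End R c.1.2) ⟨w, hw⟩), ?_⟩
  rw [prodMap_pow_apply_prodEquiv, map_zero, ← Module.End.mul_apply, Units.mul_inv]
  simp

lemma iSup_ker_prodMap_pow {g : End R c.1.1} (hg : IsNilpotent g) (h : (End R c.1.2)ˣ) :
    ⨆ k, ker (c.prodMap (g, h) ^ k) = c.1.1 := by
  obtain ⟨N, hN⟩ := hg
  refine le_antisymm (iSup_le (ker_prodMap_pow_le g h)) fun u hu ↦ mem_iSup_of_mem N ?_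
  have : u = c.prodEquiv (⟨u, hu⟩, 0) := by simp
  rw [mem_ker, this, prodMap_pow_apply_prodEquiv, hN]
  simp

lemma iInf_range_prodMap_pow {g : End R c.1.1} (hg : IsNilpotent g) (h : (End R c.1.2)ˣ) :
    ⨅ k, range (c.prodMap (g, h) ^ k) = c.1.2 := by
  obtain ⟨N, hN⟩ := hg
  refine le_antisymm (iInf_le_of_le N ?_) (le_iInf (le_range_prodMap_pow g h))
  rintro _ ⟨x, rfl⟩
  obtain ⟨y, rfl⟩ := c.prodEquiv.surjective x
  rw [prodMap_pow_apply_prodEquiv, hN]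
  simp

end ComplPair

variable (R M) in
abbrev FittingData :=
  Σ c : ComplPair R M, {g : End R c.1.1 // IsNilpotent g} × (End R c.1.2)ˣ

namespace FittingData

noncomputable def toEnd (a : FittingData R M) : End R M := a.1.prodMap (a.2.1, a.2.2)

lemma toEnd_injective : Function.Injective (toEnd (R := R) (M := M)) := by
  rintro ⟨c, g, h⟩ ⟨c', g', h'⟩ heq
  have hU : c.1.1 = c'.1.1 := calc
    c.1.1 = ⨆ k, ker (toEnd ⟨c, g, h⟩ ^ k) := (c.iSup_ker_prodMap_pow g.2 h).symm
    _ = ⨆ k, ker (toEnd ⟨c', g', h'⟩ ^ k) := by rw [heq]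
    _ = c'.1.1 := c'.iSup_ker_prodMap_pow g'.2 h'
  have hW : c.1.2 = c'.1.2 := calc
    c.1.2 = ⨅ k, range (toEnd ⟨c, g, h⟩ ^ k) := (c.iInf_range_prodMap_pow g.2 h).symm
    _ = ⨅ k, range (toEnd ⟨c', g', h'⟩ ^ k) := by rw [heq]
    _ = c'.1.2 := c'.iInf_range_prodMap_pow g'.2 h'
  obtain rfl : c = c' := Subtype.ext (Prod.ext hU hW)
  obtain ⟨hg, hh⟩ := Prod.ext_iff.mp (c.prodMap_injective heq)
  obtain rfl : g = g' := Subtype.ext hg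
  obtain rfl : h = h' := Units.ext hh
  rfl

lemma toEnd_surjective [IsNoetherian R M] [IsArtinian R M] :
    Function.Surjective (toEnd (R := R) (M := M)) := by
  intro f
  obtain ⟨m, hm⟩ := Filter.eventually_atTop.mp
    (f.eventually_iSup_ker_pow_eq.and f.eventually_iInf_range_pow_eq)
  obtain ⟨hker, hrange⟩ := hm m le_rfl
  obtain ⟨hker', hrange'⟩ := hm (m + 1) m.le_succ
  let c : ComplPair R M := ⟨(ker (f ^ m), range (f ^ m)), by
    simpa only [hker, hrange] using f.isCompl_iSup_ker_pow_iInf_range_pow⟩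
  have hcomm (x : M) : (f ^ m) (f x) = f ((f ^ m) x) := by
    rw [← Module.End.mul_apply, ← Module.End.mul_apply, ← pow_succ, ← pow_succ']
  have hU : ∀ x ∈ c.1.1, f x ∈ c.1.1 := fun x hx ↦ by
    simp only [c, mem_ker] at hx ⊢; rw [hcomm, hx, map_zero]
  have hW : ∀ x ∈ c.1.2, f x ∈ c.1.2 := by
    rintro _ ⟨y, rfl⟩; exact ⟨f y, hcomm y⟩
  have hg : IsNilpotent (f.restrict hU) := ⟨m, by
    ext x; rw [Module.End.pow_restrict]; exact x.2⟩
  have hh : IsUnit (f.restrict hW) := by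
    refine (Module.End.isUnit_iff _).mpr ⟨?_, ?_⟩
    · rw [← ker_eq_bot, eq_bot_iff]
      intro w hw
      have hwU : (w : M) ∈ c.1.1 := by
        have hfw : f w = 0 := congrArg Subtype.val hw
        have : (w : M) ∈ ker (f ^ (m + 1)) := by
          rw [mem_ker, pow_succ, Module.End.mul_apply, hfw, map_zero]
        rwa [← hker', hker] at this
      exact Subtype.ext (disjoint_def.mp c.2.disjoint _ hwU w.2)
    · rintro ⟨w, hw⟩
      obtain ⟨y, rfl⟩ : w ∈ range (f ^ (m + 1)) := by rwa [← hrange', hrange]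
      exact ⟨⟨(f ^ m) y, mem_range_self _ y⟩, Subtype.ext (by
        simp [pow_succ', Module.End.mul_apply])⟩
  refine ⟨⟨c, ⟨_, hg⟩, hh.unit⟩, ?_⟩
  ext x
  obtain ⟨y, rfl⟩ := c.prodEquiv.surjective x
  rw [toEnd, ComplPair.prodMap_apply_prodEquiv]
  simp

end FittingData

namespace ComplPair

variable {ι κ : Type*}

noncomputable def basisSum (a : Σ c : ComplPair R M, Basis ι R c.1.1 × Basis κ R c.1.2) :
    Basis (ι ⊕ κ) R M :=
  (a.2.1.prod a.2.2).map a.1.prodEquiv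

lemma basisSum_inl (a : Σ c : ComplPair R M, Basis ι R c.1.1 × Basis κ R c.1.2) (i : ι) :
    basisSum a (Sum.inl i) = a.2.1 i := by
  simp [basisSum]

lemma basisSum_inr (a : Σ c : ComplPair R M, Basis ι R c.1.1 × Basis κ R c.1.2) (j : κ) :
    basisSum a (Sum.inr j) = a.2.2 j := by
  simp [basisSum]

lemma span_range_subtype_basis {p : Submodule R M} (b : Basis ι R p) :
    span R (Set.range fun i ↦ (b i : M)) = p := by
  rw [show (fun i ↦ (b i : M)) = p.subtype ∘ b from rfl, Set.range_comp, span_image, b.span_eq,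
    map_subtype_top]

lemma basisSum_injective :
    Function.Injective (basisSum (R := R) (M := M) (ι := ι) (κ := κ)) := by
  rintro ⟨c, b₁, b₂⟩ ⟨c', b₁', b₂'⟩ heq
  have hinl (i : ι) : (b₁ i : M) = b₁' i := by
    rw [← basisSum_inl ⟨c, b₁, b₂⟩, heq, basisSum_inl]
  have hinr (j : κ) : (b₂ j : M) = b₂' j := by
    rw [← basisSum_inr ⟨c, b₁, b₂⟩, heq, basisSum_inr]
  obtain rfl : c = c' := Subtype.ext <| Prod.ext
    (by rw [← span_range_subtype_basis b₁, ← span_range_subtype_basis b₁', funext hinl])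
    (by rw [← span_range_subtype_basis b₂, ← span_range_subtype_basis b₂', funext hinr])
  obtain rfl : b₁ = b₁' := Basis.eq_of_apply_eq fun i ↦ Subtype.ext (hinl i)
  obtain rfl : b₂ = b₂' := Basis.eq_of_apply_eq fun j ↦ Subtype.ext (hinr j)
  rfl

lemma basisSum_surjective :
    Function.Surjective (basisSum (R := R) (M := M) (ι := ι) (κ := κ)) := by
  intro b
  obtain ⟨hl, hr, hdisj⟩ := linearIndependent_sum.mp b.linearIndependent
  have hcodisj :
      span R (Set.range (b ∘ Sum.inl)) ⊔ span R (Set.range (b ∘ Sum.inr)) = ⊤ := by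
    rw [← span_union, ← Sum.range_eq, b.span_eq]
  let c : ComplPair R M :=
    ⟨(span R (Set.range (b ∘ Sum.inl)), span R (Set.range (b ∘ Sum.inr))),
      hdisj, codisjoint_iff.mpr hcodisj⟩
  refine ⟨⟨c, Basis.span hl, Basis.span hr⟩, Basis.eq_of_apply_eq ?_⟩
  rintro (i | j)
  · exact (basisSum_inl _ i).trans (congrArg Subtype.val (Basis.span_apply hl i))
  · exact (basisSum_inr _ j).trans (congrArg Subtype.val (Basis.span_apply hr j))

end ComplPair

noncomputable def Module.Basis.equivLinearEquiv {ι : Type*} (b₀ : Basis ι R M) :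
    Basis ι R M ≃ (M ≃ₗ[R] M) where
  toFun b := b₀.equiv b (Equiv.refl ι)
  invFun e := b₀.map e
  left_inv b := Basis.eq_of_apply_eq fun i ↦ by simp
  right_inv e := b₀.ext' fun i ↦ by simp

instance Module.Basis.finite {ι : Type*} [Finite ι] [Finite M] : Finite (Basis ι R M) :=
  _root_.Finite.of_injective (fun b : Basis ι R M ↦ (b : ι → M)) fun _ _ h ↦
    Basis.eq_of_apply_eq (congrFun h)

def glCard (q n : ℕ) : ℕ := ∏ i : Fin n, (q ^ n - q ^ (i : ℕ))

lemma glCard_succ (q n : ℕ) : glCard q (n + 1) = q ^ n * (q ^ (n + 1) - 1) * glCard q n := by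
  have h (i : Fin n) : q ^ (n + 1) - q ^ ((i : ℕ) + 1) = q * (q ^ n - q ^ (i : ℕ)) := by
    rw [Nat.mul_sub, ← pow_succ', ← pow_succ']
  simp only [glCard, Fin.prod_univ_succ, Fin.val_zero, pow_zero, Fin.val_succ, h,
    Finset.prod_mul_distrib, Finset.prod_const, Finset.card_univ, Fintype.card_fin]
  ring

lemma glCard_pos {q : ℕ} (hq : 1 < q) (n : ℕ) : 0 < glCard q n :=
  Finset.prod_pos fun i _ ↦ Nat.sub_pos_of_lt (Nat.pow_lt_pow_right hq i.2)

lemma factorization_glCard {p e : ℕ} (hp : p.Prime) (he : 0 < e) (n : ℕ) :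
    (glCard (p ^ e) n).factorization p = e * n.choose 2 := by
  have hq : 1 < p ^ e := Nat.one_lt_pow he.ne' hp.one_lt
  induction n with
  | zero => simp [glCard]
  | succ n ih =>
    have hq1 : 1 ≤ (p ^ e) ^ (n + 1) := Nat.one_le_pow _ _ (by omega)
    have hndvd : ¬ p ∣ (p ^ e) ^ (n + 1) - 1 := fun h ↦ hp.not_dvd_one <| by
      have := Nat.dvd_sub (dvd_pow (dvd_pow_self p he.ne') n.succ_ne_zero) h
      rwa [Nat.sub_sub_self hq1] at this
    have hsub : (p ^ e) ^ (n + 1) - 1 ≠ 0 :=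
      Nat.sub_ne_zero_of_lt (Nat.one_lt_pow n.succ_ne_zero hq)
    rw [glCard_succ, Nat.factorization_mul (by positivity) (glCard_pos hq n).ne',
      Nat.factorization_mul (by positivity) hsub, Finsupp.add_apply, Finsupp.add_apply,
      Nat.factorization_eq_zero_of_not_dvd hndvd, ih, ← pow_mul]
    simp [hp.factorization_self, Nat.choose_succ_succ']
    ring

section FiniteField

variable {K V : Type*} [Field K] [AddCommGroup V] [Module K V]

variable (K) in
noncomputable def nilpotentCount (n : ℕ) : ℕ :=
  Nat.card {A : Matrix (Fin n) (Fin n) K // IsNilpotent A}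

lemma card_isNilpotent_end [FiniteDimensional K V] :
    Nat.card {f : End K V // IsNilpotent f} = nilpotentCount K (finrank K V) :=
  Nat.card_congr <| (toMatrixAlgEquiv (finBasis K V)).toEquiv.subtypeEquiv fun _ ↦
    (IsNilpotent.map_iff (toMatrixAlgEquiv (finBasis K V)).injective).symm

lemma ComplPair.finrank_snd [FiniteDimensional K V] (c : ComplPair K V) :
    finrank K c.1.2 = finrank K V - finrank K c.1.1 := by
  have := Submodule.finrank_add_eq_of_isCompl c.2
  omega

variable [Fintype K] [Finite V]

attribute [local instance] Fintype.ofFinite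

local notation "q" => Fintype.card K

lemma card_units_end : Nat.card (End K V)ˣ = glCard q (finrank K V) := by
  rw [Nat.card_congr (Units.mapEquiv (toMatrixAlgEquiv (finBasis K V)).toMulEquiv).toEquiv]
  exact Matrix.card_GL_field _

lemma card_basis {ι : Type*} [Fintype ι] :
    Nat.card (Basis ι K V) =
      if Fintype.card ι = finrank K V then glCard q (finrank K V) else 0 := by
  split_ifs with h
  · rw [Nat.card_congr
      ((finBasis K V).reindex (Fintype.equivFinOfCardEq h).symm).equivLinearEquiv,
      ← card_units_end]
    exact Nat.card_congr (LinearMap.GeneralLinearGroup.generalLinearEquiv K V).toEquiv.symm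
  · have : IsEmpty (Basis ι K V) := ⟨fun b ↦ h (finrank_eq_card_basis b).symm⟩
    exact Nat.card_of_isEmpty

lemma pow_finrank_mul_finrank_eq_sum :
    q ^ (finrank K V * finrank K V) =
      ∑ c : ComplPair K V, nilpotentCount K (finrank K c.1.1) * glCard q (finrank K c.1.2) := by
  have (U : Submodule K V) : Finite (End K U) := Module.finite_of_finite K
  calc q ^ (finrank K V * finrank K V) = Nat.card (End K V) := by
        rw [Module.natCard_eq_pow_finrank (K := K), finrank_linearMap K K V V,
          Nat.card_eq_fintype_card]
    _ = Nat.card (FittingData K V) := (Nat.card_congr (Equiv.ofBijective _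
        ⟨FittingData.toEnd_injective, FittingData.toEnd_surjective⟩)).symm
    _ = _ := by
        rw [Nat.card_sigma]
        refine Finset.sum_congr rfl fun c _ ↦ ?_
        rw [Nat.card_prod, card_isNilpotent_end, card_units_end]

lemma glCard_finrank_eq_sum {d : ℕ} (hd : d ≤ finrank K V) :
    glCard q (finrank K V) = ∑ c : ComplPair K V with finrank K c.1.1 = d,
      glCard q d * glCard q (finrank K V - d) := by
  calc glCard q (finrank K V) = Nat.card (Basis (Fin d ⊕ Fin (finrank K V - d)) K V) := by
        rw [card_basis, if_pos (by simp; omega)]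
    _ = Nat.card (Σ c : ComplPair K V,
          Basis (Fin d) K c.1.1 × Basis (Fin (finrank K V - d)) K c.1.2) :=
        (Nat.card_congr (Equiv.ofBijective _
          ⟨ComplPair.basisSum_injective, ComplPair.basisSum_surjective⟩)).symm
    _ = _ := by
        rw [Nat.card_sigma, Finset.sum_filter]
        refine Finset.sum_congr rfl fun c _ ↦ ?_
        rw [Nat.card_prod, card_basis, card_basis, c.finrank_snd]
        by_cases h : finrank K c.1.1 = d
        · simp [h]
        · simp [h, Ne.symm h]

lemma sum_nilpotentCount_div_glCard (n : ℕ) :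
    ∑ d ∈ Finset.range (n + 1), (nilpotentCount K d : ℚ) / glCard q d =
      (q : ℚ) ^ (n * n) / glCard q n := by
  have hg (d : ℕ) : (glCard q d : ℚ) ≠ 0 :=
    Nat.cast_ne_zero.mpr (glCard_pos Fintype.one_lt_card d).ne'
  have hn : finrank K (Fin n → K) = n := Module.finrank_fin_fun K
  have hsum := pow_finrank_mul_finrank_eq_sum (K := K) (V := Fin n → K)
  rw [hn] at hsum
  rw [eq_div_iff (hg n), Finset.sum_mul, ← Nat.cast_pow, hsum, Nat.cast_sum,
    ← Finset.sum_fiberwise_of_maps_to (t := Finset.range (n + 1))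
      (g := fun c : ComplPair K (Fin n → K) ↦ finrank K c.1.1)
      fun c _ ↦ Finset.mem_range_succ_iff.mpr ((Submodule.finrank_le c.1.1).trans hn.le)]
  refine Finset.sum_congr rfl fun d hd ↦ ?_
  have hcount := glCard_finrank_eq_sum ((Finset.mem_range_succ_iff.mp hd).trans hn.symm.le)
  rw [hn] at hcount
  rw [hcount, Nat.cast_sum, Finset.mul_sum]
  refine Finset.sum_congr rfl fun c hc ↦ ?_
  rw [(Finset.mem_filter.mp hc).2, c.finrank_snd, hn, (Finset.mem_filter.mp hc).2]
  push_cast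
  field_simp [hg d]

theorem card_isNilpotent_matrix (n : ℕ) :
    Nat.card {A : Matrix (Fin n) (Fin n) K // IsNilpotent A} = q ^ (n * (n - 1)) := by
  have hg (d : ℕ) : (glCard q d : ℚ) ≠ 0 :=
    Nat.cast_ne_zero.mpr (glCard_pos Fintype.one_lt_card d).ne'
  rcases n with _ | n
  · simpa [glCard, nilpotentCount] using sum_nilpotentCount_div_glCard (K := K) 0
  · have h := sum_nilpotentCount_div_glCard (K := K) (n + 1)
    rw [Finset.sum_range_succ, sum_nilpotentCount_div_glCard, ← eq_sub_iff_add_eq',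
      div_eq_iff (hg _)] at h
    have hq : 1 ≤ q ^ (n + 1) := Nat.one_le_pow _ _ Fintype.card_pos
    have hrec : (glCard q (n + 1) : ℚ) = q ^ n * (q ^ (n + 1) - 1) * glCard q n := by
      rw [glCard_succ]; push_cast [hq]; ring
    rw [nilpotentCount, sub_mul, div_mul_cancel₀ _ (hg _), hrec, div_mul_eq_mul_div,
      mul_div_assoc, mul_div_cancel_right₀ _ (hg n)] at h
    rw [← Nat.cast_inj (R := ℚ), h]
    push_cast
    ring

end FiniteField

/-- **Steinberg's theorem for `GL(n, F_q)`.** If `q = p ^ e` is a power of the prime `p`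
and `K = GL(n, F_q)`, then the number of `p`-singular elements of `K` equals `|K|_p ^ 2`,
the square of the `p`-part of the order of `K`. -/
theorem steinberg_GL (p e n : ℕ) [Fact p.Prime] (he : 0 < e) :
    Nat.card {g : Matrix.GeneralLinearGroup (Fin n) (GaloisField p e) |
        ∃ k : ℕ, orderOf g = p ^ k} =
      (p ^ ((Nat.card (Matrix.GeneralLinearGroup (Fin n) (GaloisField p e))).factorization p)) ^ 2 := by
  have hp : p.Prime := Fact.out
  let := Fintype.ofFinite (GaloisField p e)
  have hq : Fintype.card (GaloisField p e) = p ^ e := by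
    rw [Fintype.card_eq_nat_card, GaloisField.card p e he.ne']
  have hpA : (p : Matrix (Fin n) (Fin n) (GaloisField p e)) = 0 := by
    rw [← map_natCast (algebraMap (GaloisField p e) _), CharP.cast_eq_zero, map_zero]
  refine (Nat.card_congr (unitsPrimePowOrderEquiv hp hpA)).trans ?_
  rw [card_isNilpotent_matrix, Matrix.card_GL_field, ← glCard, hq, factorization_glCard hp he,
    ← pow_mul, ← pow_mul, mul_assoc, Nat.choose_two_right,
    Nat.div_mul_cancel (Nat.even_mul_pred_self n).two_dvd]
end

section
/- Let G be a finite group with a normal p-subgroup N = O_p(G). Then the map H ↦ H/N is a bijection between the p-radical subgroups of G and the p-radical subgroups of G/O_p(G). -/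
/-- `O_p(G)`: the largest normal `p`-subgroup of `G`, i.e. the join of all normal
`p`-subgroups (wrapped in `normalCore`, which is the identity on normal subgroups,
to record normality). -/
def pCore (p : ℕ) (G : Type*) [Group G] : Subgroup G :=
  (sSup {N : Subgroup G | N.Normal ∧ IsPGroup p N}).normalCore

instance pCore_normal (p : ℕ) (G : Type*) [Group G] : (pCore p G).Normal :=
  Subgroup.normalCore_normal _

/-- A subgroup `H ≤ X` is `p`-radical if it is a `p`-subgroup and `H = O_p(N_X(H))`,
where `O_p(N_X(H))` is the join of all subgroups of `N_X(H)` that are `p`-groups and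
normal in `N_X(H)`. -/
def IsRadicalPSubgroup (p : ℕ) {X : Type*} [Group X] (H : Subgroup X) : Prop :=
  IsPGroup p H ∧
    H = sSup {N : Subgroup X | N ≤ Subgroup.normalizer (H : Set X) ∧ IsPGroup p N ∧
        ∀ g ∈ Subgroup.normalizer (H : Set X), ∀ x ∈ N, g * x * g⁻¹ ∈ N}

/-!
A `p`-radical subgroup `H` contains every normal `p`-subgroup `N`: `N ∩ N_G(H)` is a normal
`p`-subgroup of `N_G(H)`, hence lies in `H = O_p(N_G(H))`, so by Dedekind's law `H` is
self-normalizing in the `p`-group `HN`, which forces `HN = H`. Thus every `p`-radical subgroup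
contains `O_p(G)`, and the correspondence theorem applies. On subgroups containing the kernel of
`G → G/O_p(G)`, taking images commutes with normalizers and with `O_p`, because the kernel is a
`p`-group; so being `p`-radical is preserved and reflected.
-/

open Subgroup
open scoped Pointwise

/-- `O_p(M)` for a subgroup `M ≤ X`, as a subgroup of `X`. -/
def pCoreIn (p : ℕ) {X : Type*} [Group X] (M : Subgroup X) : Subgroup X :=
  sSup {N : Subgroup X | N ≤ M ∧ IsPGroup p N ∧ ∀ g ∈ M, ∀ x ∈ N, g * x * g⁻¹ ∈ N}

section

variable {G Q : Type*} [Group G] [Group Q] {p : ℕ}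

theorem isRadicalPSubgroup_iff {H : Subgroup G} :
    IsRadicalPSubgroup p H ↔ IsPGroup p H ∧ H = pCoreIn p (normalizer (H : Set G)) :=
  Iff.rfl

theorem pCore_isPGroup (p : ℕ) (G : Type*) [Group G] : IsPGroup p (pCore p G) :=
  (Sylow.sSup_of_normal _ (fun _ hN ↦ hN.2) (fun _ hN ↦ hN.1)).to_le (normalCore_le _)

theorem inf_le_pCoreIn {N : Subgroup G} [N.Normal] (hN : IsPGroup p N) (M : Subgroup G) :
    N ⊓ M ≤ pCoreIn p M :=
  le_sSup ⟨inf_le_right, hN.to_le inf_le_left, fun g hg x hx ↦ mem_inf.mpr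
    ⟨Normal.conj_mem ‹_› x (mem_inf.mp hx).1 g,
      mul_mem (mul_mem hg (mem_inf.mp hx).2) (inv_mem hg)⟩⟩

theorem map_normalizer_of_surjective {f : G →* Q} (hf : Function.Surjective f)
    {H : Subgroup G} (hH : f.ker ≤ H) :
    (normalizer (H : Set G)).map f = normalizer ((H.map f : Subgroup Q) : Set Q) := by
  calc (normalizer (H : Set G)).map f
      = (normalizer (((H.map f).comap f : Subgroup G) : Set G)).map f := by
        rw [comap_map_eq_self hH]
    _ = ((normalizer ((H.map f : Subgroup Q) : Set Q)).comap f).map f := by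
        rw [comap_normalizer_eq_of_surjective _ hf]
    _ = _ := map_comap_eq_self_of_surjective hf _

theorem map_pCoreIn {f : G →* Q} (hf : Function.Surjective f) (hker : IsPGroup p f.ker)
    {M : Subgroup G} (hM : f.ker ≤ M) : (pCoreIn p M).map f = pCoreIn p (M.map f) := by
  apply le_antisymm
  · refine map_le_iff_le_comap.mpr <| sSup_le fun N ⟨hNM, hNp, hNnorm⟩ ↦
      map_le_iff_le_comap.mp <| le_sSup ⟨map_mono hNM, hNp.map f, ?_⟩
    rintro _ ⟨g, hg, rfl⟩ _ ⟨x, hx, rfl⟩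
    simpa using mem_map_of_mem f (hNnorm g hg x hx)
  · refine sSup_le fun K ⟨hKM, hKp, hKnorm⟩ ↦ ?_
    have hcomap : K.comap f ≤ pCoreIn p M := by
      refine le_sSup ⟨?_, hKp.comap_of_ker_isPGroup f hker, fun g hg x hx ↦ ?_⟩
      · simpa only [comap_map_eq_self hM] using comap_mono (f := f) hKM
      · simpa using hKnorm (f g) (mem_map_of_mem f hg) (f x) hx
    simpa only [map_comap_eq_self_of_surjective hf] using map_mono (f := f) hcomap

theorem isRadicalPSubgroup_map_iff {f : G →* Q} (hf : Function.Surjective f)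
    (hker : IsPGroup p f.ker) {H : Subgroup G} (hH : f.ker ≤ H) :
    IsRadicalPSubgroup p (H.map f) ↔ IsRadicalPSubgroup p H := by
  have hkerN : f.ker ≤ normalizer (H : Set G) := hH.trans le_normalizer
  have hkerO : f.ker ≤ pCoreIn p (normalizer (H : Set G)) := by
    simpa only [inf_of_le_left hkerN] using inf_le_pCoreIn hker (normalizer (H : Set G))
  rw [isRadicalPSubgroup_iff, isRadicalPSubgroup_iff, ← map_normalizer_of_surjective hf hH,
    ← map_pCoreIn hf hker hkerN]
  refine and_congr ⟨fun h ↦ ?_, (·.map f)⟩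
    ⟨map_injective_of_ker_le f hH hkerO, congrArg _⟩
  have h' := h.comap_of_ker_isPGroup f hker
  rwa [comap_map_eq_self hH] at h'

end

section

variable {G : Type*} [Group G] {p : ℕ}

theorem sup_inf_normalizer_le {H N : Subgroup G} [N.Normal]
    (h : N ⊓ normalizer (H : Set G) ≤ H) : (H ⊔ N) ⊓ normalizer (H : Set G) ≤ H := by
  intro x hx
  obtain ⟨hxHN, hxN⟩ := mem_inf.mp hx
  have hx' : x ∈ (H : Set G) * ((N ⊓ normalizer (H : Set G) : Subgroup G) : Set G) := by
    rw [mul_inf_assoc _ _ _ le_normalizer, ← mul_normal]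
    exact ⟨hxHN, hxN⟩
  obtain ⟨y, hy, z, hz, rfl⟩ := hx'
  exact mul_mem hy (h hz)

theorem IsPGroup.le_of_inf_normalizer_le [Fact p.Prime] {H P : Subgroup G} [Finite P]
    (hP : IsPGroup p P) (hHP : H ≤ P) (h : P ⊓ normalizer (H : Set G) ≤ H) : P ≤ H := by
  have : Group.IsNilpotent P := hP.isNilpotent
  have hself : normalizer ((H.subgroupOf P : Subgroup P) : Set P) = H.subgroupOf P := by
    refine le_antisymm ?_ le_normalizer
    rw [← subgroupOf_normalizer_eq hHP, ← inf_subgroupOf_right]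
    exact subgroupOf_mono P (inf_comm P _ ▸ h)
  rw [← subgroupOf_eq_top]
  exact normalizerCondition_iff_only_full_group_self_normalizing.mp
    Group.normalizerCondition_of_isNilpotent _ hself

theorem IsRadicalPSubgroup.le_of_normal [Finite G] (hp : p.Prime) {H N : Subgroup G} [N.Normal]
    (hH : IsRadicalPSubgroup p H) (hN : IsPGroup p N) : N ≤ H := by
  have : Fact p.Prime := ⟨hp⟩
  have hNH : N ⊓ normalizer (H : Set G) ≤ H :=
    (inf_le_pCoreIn hN _).trans_eq hH.2.symm
  exact le_sup_right.trans <| (hH.1.to_sup_of_normal_right hN).le_of_inf_normalizer_le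
    le_sup_left (sup_inf_normalizer_le hNH)

end

/-- The map `H ↦ H / O_p(G)` is a bijection between the `p`-radical subgroups of `G`
and the `p`-radical subgroups of `G / O_p(G)`. -/
theorem pRadical_quotient_bijection (G : Type*) [Group G] [Finite G] (p : ℕ)
    (hp : p.Prime) :
    Set.BijOn (Subgroup.map (QuotientGroup.mk' (pCore p G)))
      {H : Subgroup G | IsRadicalPSubgroup p H}
      {K : Subgroup (G ⧸ pCore p G) | IsRadicalPSubgroup p K} := by
  set f := QuotientGroup.mk' (pCore p G)
  have hf : Function.Surjective f := QuotientGroup.mk'_surjective _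
  have hker : IsPGroup p f.ker := by
    rw [QuotientGroup.ker_mk']
    exact pCore_isPGroup p G
  have hkerH {H : Subgroup G} (hH : IsRadicalPSubgroup p H) : f.ker ≤ H :=
    (QuotientGroup.ker_mk' _).trans_le (hH.le_of_normal hp (pCore_isPGroup p G))
  refine ⟨fun H hH ↦ (isRadicalPSubgroup_map_iff hf hker (hkerH hH)).mpr hH,
    fun H₁ hH₁ H₂ hH₂ ↦ map_injective_of_ker_le f (hkerH hH₁) (hkerH hH₂),
    fun K hK ↦ ⟨K.comap f, ?_, map_comap_eq_self_of_surjective hf K⟩⟩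
  refine (isRadicalPSubgroup_map_iff hf hker (MonoidHom.ker_le_comap f K)).mp ?_
  rwa [map_comap_eq_self_of_surjective hf K]
end

section
/- In K = GL(n, F_q) with q a power of p, if U_I and U_J are the unipotent radicals of the standard parabolic subgroups P_I and P_J (for subsets I, J of the set of fundamental roots), then the transporter set N_K(U_I, U_J) = {g : g⁻¹U_Ig ⊆ U_J} equals N_K(U_I) = P_I when I ⊇ J, and is empty otherwise. -/
namespace ParabolicGL

variable (n : ℕ) {F : Type*} [Field F]

/-- Indices `i j` of `Fin n` are separated by a wall of the subset `I` of the `n - 1`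
fundamental roots: some `k ∉ I` lies between them.  The blocks of the standard
parabolic `P_I` are the maximal wall-free intervals. -/
def Separated (I : Finset (Fin (n - 1))) (i j : Fin n) : Prop :=
  ∃ k : Fin (n - 1), k ∉ I ∧ min i.val j.val ≤ k.val ∧ k.val < max i.val j.val

/-- The standard parabolic subgroup `P_I` of `GL(n, F)`: block upper triangular
matrices for the block decomposition determined by `I`. -/
def P (I : Finset (Fin (n - 1))) : Set (Matrix.GeneralLinearGroup (Fin n) F) :=
  {A | ∀ i j : Fin n, j < i → Separated n I i j →
    (A : Matrix (Fin n) (Fin n) F) i j = 0}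

/-- The unipotent radical `U_I = O_p(P_I)` of the standard parabolic `P_I`: block upper
triangular matrices whose diagonal blocks are identity blocks. -/
def U (I : Finset (Fin (n - 1))) : Set (Matrix.GeneralLinearGroup (Fin n) F) :=
  {A | A ∈ P n I ∧ ∀ i j : Fin n, ¬ Separated n I i j →
    (A : Matrix (Fin n) (Fin n) F) i j = if i = j then 1 else 0}

end ParabolicGL

open ParabolicGL

/-!
Index the blocks by `blockIndex I i`, the number of walls `k ∉ I` below `i`. Then `P_I` consists
of the block upper triangular matrices and `u ∈ U_I` iff `u - 1` is strictly block upper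
triangular; the latter form an ideal in the former, and for `J ⊆ I` they are also strictly block
upper triangular for `J`. This gives `P_I ⊆ N_K(U_I, U_J)`.

Conversely, let `g⁻¹ U_I g ⊆ U_J`. Conjugating the transvections `1 + E_ab` with `a` in an
earlier `I`-block than `b` shows that whenever `(g⁻¹)_ia ≠ 0` and `g_bj ≠ 0`, the index `i` lies
in an earlier `J`-block than `j`. So if `J`-block `m` is the last one that `g⁻¹` reaches from the
first `I`-blocks, `g⁻¹` maps the span of the first `I`-blocks into the span of the `J`-blocks up
to `m`, and `g` maps that span back. Both are coordinate subspaces, so they have the same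
dimension and therefore coincide. Hence `g` stabilises the `I`-flag, so `g ∈ P_I`, and every
subspace of the `I`-flag is in the `J`-flag, so every wall of `I` is a wall of `J`.
-/

open Matrix Finset

namespace Matrix

variable {ι R α : Type*}

def StrictBlockTriangular [Zero R] [LT α] (M : Matrix ι ι R) (b : ι → α) : Prop :=
  ∀ ⦃i j⦄, ¬ b i < b j → M i j = 0

variable [LinearOrder α] [Fintype ι] [NonUnitalNonAssocSemiring R] {M X : Matrix ι ι R}
  {b : ι → α}

theorem BlockTriangular.mul_strictBlockTriangular (hM : BlockTriangular M b)
    (hX : StrictBlockTriangular X b) : StrictBlockTriangular (M * X) b := by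
  intro i j hij
  rw [mul_apply]
  refine Finset.sum_eq_zero fun k _ => ?_
  by_cases! hki : b k < b i
  · rw [hM hki, zero_mul]
  · rw [hX fun hkj => hij (hki.trans_lt hkj), mul_zero]

theorem StrictBlockTriangular.mul_blockTriangular (hX : StrictBlockTriangular X b)
    (hM : BlockTriangular M b) : StrictBlockTriangular (X * M) b := by
  intro i j hij
  rw [mul_apply]
  refine Finset.sum_eq_zero fun k _ => ?_
  by_cases! hjk : b j < b k
  · rw [hM hjk, mul_zero]
  · rw [hX fun hik => hij (hik.trans_le hjk), zero_mul]

end Matrix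

theorem Units.val_inv_mul_mul_sub_one {R : Type*} [Ring R] (g u : Rˣ) :
    ((g⁻¹ * u * g : Rˣ) : R) - 1 = ↑g⁻¹ * (↑u - 1) * ↑g := by
  simp [mul_sub, sub_mul]

theorem Matrix.submatrix_mul_submatrix_of_rows_vanish {ι l o R : Type*} [Fintype ι]
    [NonUnitalNonAssocSemiring R] (A : Matrix ι ι R) (B : Matrix ι ι R) (e₁ : l → ι)
    (e₂ : o → ι) (t : Finset ι) (hB : ∀ k ∉ t, ∀ y, B k (e₂ y) = 0) :
    (A.submatrix e₁ ((↑) : t → ι) : Matrix l t R) * (B.submatrix (↑) e₂ : Matrix t o R) =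
      (A * B).submatrix e₁ e₂ := by
  ext x y
  simp only [mul_apply, submatrix_apply]
  rw [Finset.sum_coe_sort t fun k => A (e₁ x) k * B k (e₂ y),
    Finset.sum_subset (Finset.subset_univ t) fun k _ hk => by rw [hB k hk y, mul_zero]]

theorem Matrix.card_eq_of_mul_eq_one_of_vanish {ι R : Type*} [Fintype ι] [DecidableEq ι]
    [Semiring R] [InvariantBasisNumber R] {A B : Matrix ι ι R} (hAB : A * B = 1) (hBA : B * A = 1)
    {s t : Finset ι} (hB : ∀ i a, a ∈ s → i ∉ t → B i a = 0)
    (hA : ∀ b j, b ∉ s → j ∈ t → A b j = 0) : s.card = t.card := by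
  have hAB' := submatrix_mul_submatrix_of_rows_vanish A B ((↑) : s → ι) ((↑) : s → ι) t
    fun k hk y => hB k y y.2 hk
  have hBA' := submatrix_mul_submatrix_of_rows_vanish B A ((↑) : t → ι) ((↑) : t → ι) s
    fun k hk y => hA k y hk y.2
  rw [hAB, submatrix_one _ Subtype.val_injective] at hAB'
  rw [hBA, submatrix_one _ Subtype.val_injective] at hBA'
  simpa using Matrix.square_of_invertible _ _ hAB' hBA'

theorem Finset.eq_of_isLowerSet_of_card_eq {α : Type*} [LinearOrder α] {s t : Finset α}
    (hs : IsLowerSet (s : Set α)) (ht : IsLowerSet (t : Set α)) (hst : s.card = t.card) :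
    s = t := by
  rcases hs.total ht with h | h
  · exact Finset.eq_of_subset_of_card_le (Finset.coe_subset.1 h) hst.ge
  · exact (Finset.eq_of_subset_of_card_le (Finset.coe_subset.1 h) hst.le).symm

theorem Matrix.mul_single_mul_apply {ι R : Type*} [Fintype ι] [DecidableEq ι] [Semiring R]
    (B A : Matrix ι ι R) (a b i j : ι) (c : R) :
    (B * single a b c * A) i j = B i a * c * A b j := by
  simp [mul_apply, single_apply, ite_and]

theorem Matrix.exists_sublevel_eq_of_conj_single_strictBlockTriangular {ι R : Type*}
    [Fintype ι] [DecidableEq ι] [LinearOrder ι] [CommRing R] [IsDomain R]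
    {A B : Matrix ι ι R} (hAB : A * B = 1) (hBA : B * A = 1) {f f' : ι → ℕ}
    (hf : Monotone f) (hf' : Monotone f')
    (hconj : ∀ a b, f a < f b → StrictBlockTriangular (B * single a b 1 * A) f') (a₀ : ι) :
    ∃ m, (∀ x, f x ≤ f a₀ ↔ f' x ≤ m) ∧ ∀ b j, f a₀ < f b → f' j ≤ m → A b j = 0 := by
  classical
  have hsupp : ∀ a b i j, f a < f b → B i a ≠ 0 → A b j ≠ 0 → f' i < f' j := by
    intro a b i j hab hia hbj
    by_contra hij
    have hentry := hconj a b hab hij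
    rw [mul_single_mul_apply, mul_one] at hentry
    exact mul_ne_zero hia hbj hentry
  set X := univ.filter fun i => ∃ a, f a ≤ f a₀ ∧ B i a ≠ 0
  have hX : X.Nonempty := by
    by_contra! hX
    have hcol : (A * B) a₀ a₀ = 0 := Finset.sum_eq_zero fun k _ => by
      by_contra hk
      have hk' : k ∈ X := mem_filter.2 ⟨mem_univ k, a₀, le_rfl, right_ne_zero_of_mul hk⟩
      simp [hX] at hk'
    rw [hAB, one_apply_eq] at hcol
    exact one_ne_zero hcol
  -- the last `f'`-block reached by the columns `a` of `B` with `f a ≤ f a₀`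
  set m := X.sup' hX f'
  have hA : ∀ b j, f a₀ < f b → f' j ≤ m → A b j = 0 := by
    intro b j hb hj
    by_contra hbj
    obtain ⟨i, hi, hm⟩ := exists_mem_eq_sup' hX f'
    obtain ⟨a, ha, hia⟩ := (mem_filter.1 hi).2
    have := hsupp a b i j (ha.trans_lt hb) hia hbj
    omega
  have hB : ∀ i a, a ∈ univ.filter (f · ≤ f a₀) → i ∉ univ.filter (f' · ≤ m) → B i a = 0 := by
    intro i a ha hi
    by_contra hia
    have hiX : i ∈ X := mem_filter.2 ⟨mem_univ i, a, (mem_filter.1 ha).2, hia⟩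
    exact hi (mem_filter.2 ⟨mem_univ i, le_sup' f' hiX⟩)
  have hcard := card_eq_of_mul_eq_one_of_vanish hAB hBA hB fun b j hb hj =>
    hA b j (by simpa using hb) (mem_filter.1 hj).2
  have hsub := Finset.eq_of_isLowerSet_of_card_eq
    (by rw [coe_filter_univ]; exact (isLowerSet_Iic _).preimage hf)
    (by rw [coe_filter_univ]; exact (isLowerSet_Iic _).preimage hf') hcard
  exact ⟨m, fun x => by simpa using congrArg (x ∈ ·) hsub, hA⟩

namespace ParabolicGL

variable {n : ℕ} {F : Type*} [Field F]

def blockIndex (I : Finset (Fin (n - 1))) (i : Fin n) : ℕ :=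
  (Iᶜ.filter fun k => k.val < i.val).card

variable {I J : Finset (Fin (n - 1))}

theorem blockIndex_mono : Monotone (blockIndex I) := fun _ _ hij =>
  card_le_card <| monotone_filter_right _ fun _ _ hk => hk.trans_le hij

theorem blockIndex_lt_of_wall {i j : Fin n} {k : Fin (n - 1)} (hk : k ∉ I)
    (hik : i.val ≤ k.val) (hkj : k.val < j.val) : blockIndex I i < blockIndex I j := by
  refine card_lt_card ⟨monotone_filter_right _ fun _ _ hk' => hk'.trans (hik.trans_lt hkj), ?_⟩
  intro hsub
  have := (mem_filter.1 (hsub (mem_filter.2 ⟨mem_compl.2 hk, hkj⟩))).2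
  omega

theorem exists_wall_of_blockIndex_lt {i j : Fin n} (h : blockIndex I i < blockIndex I j) :
    ∃ k : Fin (n - 1), k ∉ I ∧ i.val ≤ k.val ∧ k.val < j.val := by
  obtain ⟨k, hkj, hki⟩ := not_subset.1 fun hsub => h.not_ge (card_le_card hsub)
  rw [mem_filter, mem_compl] at hkj hki
  exact ⟨k, hkj.1, not_lt.1 fun h => hki ⟨hkj.1, h⟩, hkj.2⟩

theorem separated_iff {i j : Fin n} :
    Separated n I i j ↔ blockIndex I i ≠ blockIndex I j := by
  constructor
  · rintro ⟨k, hk, hmin, hmax⟩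
    rcases le_total i j with hij | hij
    · exact (blockIndex_lt_of_wall hk (by omega) (by omega)).ne
    · exact (blockIndex_lt_of_wall hk (by omega) (by omega)).ne'
  · intro hne
    rcases hne.lt_or_gt with hlt | hlt
    all_goals
      obtain ⟨k, hk, hik, hkj⟩ := exists_wall_of_blockIndex_lt hlt
      exact ⟨k, hk, by omega, by omega⟩

theorem blockIndex_lt_of_subset (hJI : J ⊆ I) {i j : Fin n}
    (h : blockIndex I i < blockIndex I j) : blockIndex J i < blockIndex J j := by
  obtain ⟨k, hk, hik, hkj⟩ := exists_wall_of_blockIndex_lt h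
  exact blockIndex_lt_of_wall (fun hkJ => hk (hJI hkJ)) hik hkj

theorem mem_P_iff {g : GL (Fin n) F} :
    g ∈ P n I ↔ BlockTriangular (g : Matrix (Fin n) (Fin n) F) (blockIndex I) := by
  constructor
  · intro hg i j hij
    obtain ⟨k, hk, hjk, hki⟩ := exists_wall_of_blockIndex_lt hij
    exact hg i j (by omega) (separated_iff.2 hij.ne')
  · intro hg i j hji hsep
    exact hg ((blockIndex_mono hji.le).lt_of_ne (separated_iff.1 hsep).symm)

theorem mem_U_iff {g : GL (Fin n) F} :
    g ∈ U n I ↔ StrictBlockTriangular ((g : Matrix (Fin n) (Fin n) F) - 1) (blockIndex I) := by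
  simp only [U, Set.mem_ofPred_eq, mem_P_iff, separated_iff, not_not, ← one_apply,
    StrictBlockTriangular, Matrix.sub_apply, sub_eq_zero]
  constructor
  · rintro ⟨hP, hdiag⟩ i j hij
    rcases (not_lt.1 hij).lt_or_eq with hlt | heq
    · rw [hP hlt, one_apply_ne (by rintro rfl; exact hlt.false)]
    · exact hdiag i j heq.symm
  · intro hg
    refine ⟨fun i j hji => ?_, fun i j heq => hg heq.not_lt⟩
    rw [hg hji.not_gt, one_apply_ne (by rintro rfl; exact hji.false)]

theorem inv_mem_P {g : GL (Fin n) F} (hg : g ∈ P n I) : g⁻¹ ∈ P n I := by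
  rw [mem_P_iff, coe_units_inv] at *
  let := g.invertible
  exact blockTriangular_inv_of_blockTriangular hg

theorem conj_mem_U (hJI : J ⊆ I) {g u : GL (Fin n) F} (hg : g ∈ P n I) (hu : u ∈ U n I) :
    g⁻¹ * u * g ∈ U n J := by
  rw [mem_U_iff, Units.val_inv_mul_mul_sub_one] at *
  have hconj := ((mem_P_iff.1 (inv_mem_P hg)).mul_strictBlockTriangular hu).mul_blockTriangular
    (mem_P_iff.1 hg)
  exact fun i j hij => hconj fun h => hij (blockIndex_lt_of_subset hJI h)

theorem strictBlockTriangular_conj_single_of_forall_conj_mem_U {g : GL (Fin n) F}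
    (H : ∀ u ∈ U n I, g⁻¹ * u * g ∈ U n J) {a b : Fin n}
    (hab : blockIndex I a < blockIndex I b) :
    StrictBlockTriangular
      ((↑g⁻¹ : Matrix (Fin n) (Fin n) F) * single a b 1 * (g : Matrix (Fin n) (Fin n) F))
      (blockIndex J) := by
  have hne : a ≠ b := by rintro rfl; exact hab.false
  let t := GeneralLinearGroup.mkOfDetNeZero (transvection a b (1 : F))
    (by rw [det_transvection_of_ne _ _ hne]; exact one_ne_zero)
  have ht : (t : Matrix (Fin n) (Fin n) F) - 1 = single a b 1 := by simp [t, transvection]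
  have htU : t ∈ U n I := by
    rw [mem_U_iff, ht]
    intro i j hij
    exact single_apply_of_ne _ _ _ _ _ (by rintro ⟨rfl, rfl⟩; exact hij hab)
  have hconj := mem_U_iff.1 (H t htU)
  rwa [Units.val_inv_mul_mul_sub_one, ht] at hconj

theorem mem_P_and_subset_of_forall_conj_mem_U {g : GL (Fin n) F}
    (H : ∀ u ∈ U n I, g⁻¹ * u * g ∈ U n J) : g ∈ P n I ∧ J ⊆ I := by
  have hflag := exists_sublevel_eq_of_conj_single_strictBlockTriangular (Units.mul_inv g)
    (Units.inv_mul g) blockIndex_mono blockIndex_mono fun _ _ =>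
      strictBlockTriangular_conj_single_of_forall_conj_mem_U H
  refine ⟨mem_P_iff.2 fun b j hjb => ?_, fun k hkJ => ?_⟩
  · obtain ⟨m, hiff, hA⟩ := hflag j
    exact hA b j hjb ((hiff j).1 le_rfl)
  · by_contra hkI
    -- `x` and `y` lie in one `J`-block but in different `I`-blocks
    let x : Fin n := ⟨k, by omega⟩
    let y : Fin n := ⟨k + 1, by omega⟩
    have hJ : blockIndex J x = blockIndex J y := by
      by_contra hne
      obtain ⟨k', hk', hxk, hky⟩ := separated_iff.2 hne
      have hk'k : k' = k := Fin.ext (by simp [x, y] at hxk hky; omega)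
      exact hk' (hk'k ▸ hkJ)
    obtain ⟨m, hiff, -⟩ := hflag x
    have hy := (hiff y).2 (hJ ▸ (hiff x).1 le_rfl)
    have hxy : blockIndex I x < blockIndex I y := blockIndex_lt_of_wall hkI le_rfl (by simp [y])
    omega

theorem forall_conj_mem_U_iff {g : GL (Fin n) F} :
    (∀ u ∈ U n I, g⁻¹ * u * g ∈ U n J) ↔ g ∈ P n I ∧ J ⊆ I :=
  ⟨mem_P_and_subset_of_forall_conj_mem_U, fun ⟨hg, hJI⟩ _ hu => conj_mem_U hJI hg hu⟩

end ParabolicGL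

open ParabolicGL

theorem transporter_unipotent_radicals_general (p e n : ℕ) [Fact p.Prime]
    (I J : Finset (Fin (n - 1))) :
    (J ⊆ I →
      ({g : Matrix.GeneralLinearGroup (Fin n) (GaloisField p e) |
          ∀ u ∈ U n I, g⁻¹ * u * g ∈ U n J} = P n I ∧
        {g : Matrix.GeneralLinearGroup (Fin n) (GaloisField p e) |
          ∀ u : Matrix.GeneralLinearGroup (Fin n) (GaloisField p e),
            u ∈ U n I ↔ g * u * g⁻¹ ∈ U n I} = P n I)) ∧
    (¬ J ⊆ I →
      {g : Matrix.GeneralLinearGroup (Fin n) (GaloisField p e) |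
        ∀ u ∈ U n I, g⁻¹ * u * g ∈ U n J} = ∅) := by
  refine ⟨fun hJI => ⟨?_, ?_⟩, fun hJI => ?_⟩
  · ext g
    simp [forall_conj_mem_U_iff, hJI]
  · ext g
    refine ⟨fun H => (forall_conj_mem_U_iff.1 fun u hu => (H _).2 ?_).1, fun hg u => ⟨?_, ?_⟩⟩
    · simpa [mul_assoc] using hu
    · exact fun hu => by simpa using conj_mem_U subset_rfl (inv_mem_P hg) hu
    · exact fun hu => by simpa [mul_assoc] using conj_mem_U subset_rfl hg hu
  · ext g
    simp [forall_conj_mem_U_iff, hJI]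

/-- In `K = GL(n, F_q)`, `q` a power of the prime `p`, for subsets `I, J` of the set of
fundamental roots, the transporter set `N_K(U_I, U_J) = {g : g⁻¹ U_I g ⊆ U_J}` equals
`N_K(U_I) = P_I` when `I ⊇ J`, and is empty otherwise. -/
theorem transporter_unipotent_radicals (p e n : ℕ) [Fact p.Prime] (he : 0 < e)
    (I J : Finset (Fin (n - 1))) :
    (J ⊆ I →
      ({g : Matrix.GeneralLinearGroup (Fin n) (GaloisField p e) |
          ∀ u ∈ U n I, g⁻¹ * u * g ∈ U n J} = P n I ∧
        {g : Matrix.GeneralLinearGroup (Fin n) (GaloisField p e) |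
          ∀ u : Matrix.GeneralLinearGroup (Fin n) (GaloisField p e),
            u ∈ U n I ↔ g * u * g⁻¹ ∈ U n I} = P n I)) ∧
    (¬ J ⊆ I →
      {g : Matrix.GeneralLinearGroup (Fin n) (GaloisField p e) |
        ∀ u ∈ U n I, g⁻¹ * u * g ∈ U n J} = ∅) :=
  transporter_unipotent_radicals_general p e n I J
end

section
/- The q-multinomial (Solomon/Witt) identity: for every integer m ≥ 1, Σ over all ordered compositions (m_1,...,m_k) of m of (-1)^k · [m](q)! / ([m_1](q)!···[m_k](q)!) equals (-1)^m q^{binomial(m,2)}, as polynomials in q. -/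
/-!
Dividing by `[m]!`, the claim says that the weights `w d = -1 / [d]!` summed over compositions
give `(-1)^m q^(m choose 2) / [m]!`. Splitting off the first block of a composition turns this into
the convolution identity `∑_{i+j=n} (-1)^j q^(j choose 2) / ([i]! [j]!) = 0` for `n ≥ 1`, the
coefficientwise form of `e_q(x) E_q(-x) = 1` for the two q-exponentials, which follows from
`[i+j] = q^j [i] + [j]`.
-/

open Finset

section QNumbers

variable {R : Type*}

def qNum [Semiring R] (q : R) (d : ℕ) : R := ∑ i ∈ range d, q ^ i

def qFactorial [CommSemiring R] (q : R) (d : ℕ) : R := ∏ j ∈ range d, qNum q (j + 1)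

@[simp]
theorem qNum_zero [Semiring R] (q : R) : qNum q 0 = 0 := by simp [qNum]

theorem qNum_add [Semiring R] (q : R) (a b : ℕ) :
    qNum q (a + b) = qNum q a + q ^ a * qNum q b := by
  simp [qNum, sum_range_add, pow_add, mul_sum]

@[simp]
theorem qFactorial_zero [CommSemiring R] (q : R) : qFactorial q 0 = 1 := by simp [qFactorial]

theorem qFactorial_succ [CommSemiring R] (q : R) (n : ℕ) :
    qFactorial q (n + 1) = qFactorial q n * qNum q (n + 1) :=
  prod_range_succ _ _

theorem qFactorial_ne_zero [CommSemiring R] [NoZeroDivisors R] [Nontrivial R] {q : R}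
    (hq : ∀ n, qNum q (n + 1) ≠ 0) (n : ℕ) : qFactorial q n ≠ 0 :=
  prod_ne_zero_iff.2 fun j _ => hq j

end QNumbers

theorem qNum_X_succ_ne_zero {K : Type*} [Field K] (n : ℕ) :
    qNum (RatFunc.X : RatFunc K) (n + 1) ≠ 0 := by
  have hpoly : qNum (RatFunc.X : RatFunc K) (n + 1) =
      algebraMap (Polynomial K) (RatFunc K) (qNum (Polynomial.X : Polynomial K) (n + 1)) := by
    simp [qNum, map_sum, RatFunc.algebraMap_X]
  rw [hpoly]
  refine RatFunc.algebraMap_ne_zero fun h => ?_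
  simpa [qNum, Polynomial.eval_finsetSum, sum_range_succ'] using congrArg (Polynomial.eval 0) h

theorem sum_antidiagonal_neg_one_pow_div_qFactorial {K : Type*} [Field K] {q : K}
    (hq : ∀ n, qNum q (n + 1) ≠ 0) (n : ℕ) :
    ∑ p ∈ antidiagonal (n + 1),
      (-1) ^ p.2 * q ^ p.2.choose 2 / (qFactorial q p.1 * qFactorial q p.2) = 0 := by
  set e : ℕ × ℕ → K := fun p =>
    (-1) ^ p.2 * q ^ p.2.choose 2 / (qFactorial q p.1 * qFactorial q p.2)
  have hsplit : ∀ p ∈ antidiagonal (n + 1),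
      qNum q (n + 1) * e p = q ^ p.2 * qNum q p.1 * e p + qNum q p.2 * e p := by
    intro p hp
    rw [← mem_antidiagonal.1 hp, add_comm, qNum_add]
    ring
  -- after cancelling `[i+1]` and `[j+1]`, both terms are `±(-1)^j q^(j choose 2 + j) / ([i]! [j]!)`
  have hcancel : ∀ p ∈ antidiagonal n,
      q ^ p.2 * qNum q (p.1 + 1) * e (p.1 + 1, p.2) + qNum q (p.2 + 1) * e (p.1, p.2 + 1) = 0 := by
    intro p _
    have := qFactorial_ne_zero hq
    have := hq p.1
    have := hq p.2
    simp only [e, qFactorial_succ, Nat.choose_succ_succ', Nat.choose_one_right]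
    field_simp
    ring
  suffices qNum q (n + 1) * ∑ p ∈ antidiagonal (n + 1), e p = 0 from
    (mul_eq_zero.1 this).resolve_left (hq n)
  rw [mul_sum, sum_congr rfl hsplit, sum_add_distrib, Nat.sum_antidiagonal_succ,
    Nat.sum_antidiagonal_succ']
  simp only [qNum_zero, mul_zero, zero_mul, zero_add]
  rw [← sum_add_distrib, sum_eq_zero hcancel]

theorem Composition.sum_prod_map_blocks_zero {R : Type*} [CommSemiring R] (w : ℕ → R) :
    ∑ c : Composition 0, (c.blocks.map w).prod = 1 := by
  have : ∀ c : Composition 0, c.blocks = [] := fun c => c.blocks_eq_nil.2 rfl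
  simp [this, composition_card]

theorem Composition.sum_prod_map_blocks_succ {R : Type*} [CommSemiring R] (w : ℕ → R) (n : ℕ) :
    ∑ c : Composition (n + 1), (c.blocks.map w).prod =
      ∑ p ∈ antidiagonal n, w (p.1 + 1) * ∑ c : Composition p.2, (c.blocks.map w).prod := by
  simp_rw [mul_sum]
  rw [sum_sigma']
  symm
  refine sum_bij (fun x hx => ⟨(x.1.1 + 1) :: x.2.blocks, ?_, ?_⟩) (fun _ _ => mem_univ _) ?_ ?_
    (fun _ _ => rfl)
  · intro i hi
    rcases List.mem_cons.1 hi with rfl | hi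
    exacts [Nat.succ_pos _, x.2.blocks_pos hi]
  · have := mem_antidiagonal.1 (mem_sigma.1 hx).1
    simp only [List.sum_cons, x.2.blocks_sum]
    omega
  · rintro ⟨⟨i, j⟩, c⟩ hx ⟨⟨i', j'⟩, c'⟩ hx' h
    simp only [mem_sigma, HasAntidiagonal.mem_antidiagonal, mem_univ, and_true] at hx hx'
    have hb := congrArg Composition.blocks h
    simp only [List.cons.injEq, Nat.add_right_cancel_iff] at hb
    obtain ⟨rfl, hb⟩ := hb
    obtain rfl : j = j' := by omega
    rw [Composition.ext hb]
  · intro c _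
    obtain ⟨a, l, hc⟩ := List.exists_cons_of_ne_nil (c.blocks_eq_nil.not.2 n.succ_ne_zero)
    have ha : 0 < a := c.blocks_pos (by simp [hc])
    have hsum : a + l.sum = n + 1 := by simpa [hc] using c.blocks_sum
    refine ⟨⟨(a - 1, l.sum), ⟨l, fun hi => c.blocks_pos (by simp [hc, hi]), rfl⟩⟩, ?_, ?_⟩
    · simp only [mem_sigma, HasAntidiagonal.mem_antidiagonal, mem_univ, and_true]
      omega
    · apply Composition.ext
      simp only [hc, Nat.sub_add_cancel ha]

theorem sum_compositions_prod_map_neg_inv_qFactorial {K : Type*} [Field K] {q : K}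
    (hq : ∀ n, qNum q (n + 1) ≠ 0) (m : ℕ) :
    ∑ c : Composition m, (c.blocks.map fun d => -(qFactorial q d)⁻¹).prod =
      (-1) ^ m * q ^ m.choose 2 / qFactorial q m := by
  induction m using Nat.strong_induction_on with
  | _ m ih =>
  rcases m with _ | n
  · simp [Composition.sum_prod_map_blocks_zero]
  have hsum := sum_antidiagonal_neg_one_pow_div_qFactorial hq n
  rw [Nat.sum_antidiagonal_succ] at hsum
  have hterm : ∀ p ∈ antidiagonal n,
      -(qFactorial q (p.1 + 1))⁻¹ *
          ∑ c : Composition p.2, (c.blocks.map fun d => -(qFactorial q d)⁻¹).prod =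
        -((-1) ^ p.2 * q ^ p.2.choose 2 / (qFactorial q (p.1 + 1) * qFactorial q p.2)) := by
    intro p hp
    rw [ih p.2 (by have := mem_antidiagonal.1 hp; omega)]
    ring
  rw [Composition.sum_prod_map_blocks_succ, sum_congr rfl hterm, sum_neg_distrib,
    eq_neg_of_add_eq_zero_right hsum, neg_neg, qFactorial_zero, one_mul]

theorem List.prod_map_neg_inv {α K : Type*} [Field K] (f : α → K) (l : List α) :
    (l.map fun a => -(f a)⁻¹).prod = (-1) ^ l.length / (l.map f).prod := by
  induction l with
  | nil => simp
  | cons a l ih => simp [ih, pow_succ]; ring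

theorem sum_compositions_neg_one_pow_mul_qMultinomial {K : Type*} [Field K] {q : K}
    (hq : ∀ n, qNum q (n + 1) ≠ 0) (m : ℕ) :
    ∑ c : Composition m,
        (-1) ^ c.length * (qFactorial q m / (c.blocks.map (qFactorial q)).prod) =
      (-1) ^ m * q ^ m.choose 2 := by
  have hterm : ∀ c : Composition m,
      (-1) ^ c.length * (qFactorial q m / (c.blocks.map (qFactorial q)).prod) =
        qFactorial q m * (c.blocks.map fun d => -(qFactorial q d)⁻¹).prod := by
    intro c
    rw [List.prod_map_neg_inv, Composition.length]
    ring
  rw [sum_congr rfl fun c _ => hterm c, ← mul_sum, sum_compositions_prod_map_neg_inv_qFactorial hq,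
    mul_div_cancel₀ _ (qFactorial_ne_zero hq m)]

theorem q_multinomial_identity_general (m : ℕ) :
    letI X : RatFunc ℚ := RatFunc.X
    letI qb : ℕ → RatFunc ℚ := fun d => ∑ i ∈ Finset.range d, X ^ i
    letI qfact : ℕ → RatFunc ℚ := fun d => ∏ j ∈ Finset.range d, qb (j + 1)
    ∑ c : Composition m,
        (-1 : RatFunc ℚ) ^ c.length * (qfact m / (c.blocks.map qfact).prod) =
      (-1 : RatFunc ℚ) ^ m * X ^ m.choose 2 :=
  sum_compositions_neg_one_pow_mul_qMultinomial qNum_X_succ_ne_zero m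

/-- **The q-multinomial (Solomon/Witt) identity.** For `m ≥ 1`, summing over all
ordered compositions `(m₁, …, m_k)` of `m`:
`∑ (-1)^k [m]!(q) / ([m₁]!(q) ⋯ [m_k]!(q)) = (-1)^m q^(C(m,2))`,
where `[d](q) = 1 + q + ⋯ + q^(d-1)` and `[d]!(q) = [1](q)[2](q)⋯[d](q)`
(identity of rational functions, both sides being polynomials in `q`). -/
theorem q_multinomial_identity (m : ℕ) (hm : 1 ≤ m) :
    letI X : RatFunc ℚ := RatFunc.X
    letI qb : ℕ → RatFunc ℚ := fun d => ∑ i ∈ Finset.range d, X ^ i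
    letI qfact : ℕ → RatFunc ℚ := fun d => ∏ j ∈ Finset.range d, qb (j + 1)
    ∑ c : Composition m,
        (-1 : RatFunc ℚ) ^ c.length * (qfact m / (c.blocks.map qfact).prod) =
      (-1 : RatFunc ℚ) ^ m * X ^ m.choose 2 :=
  q_multinomial_identity_general m
end

section
/- Generalized Steinberg theorem for GL(n, F_q), q a power of p: for any standard parabolic subgroup P of K = GL(n, F_q), the number of p-singular elements of P times |O_p(P)| equals |K|_p^2, i.e. |{g ∈ P : order of g is a power of p}| · |O_p(P)| = q^{n(n-1)}. -/
/-!
A `p`-singular element of `P_I` is unipotent, `g = 1 + N` with `N` nilpotent and block upper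
triangular. Such an `N` consists of arbitrary entries above the diagonal blocks (`w` positions)
and a nilpotent matrix in each diagonal block (of sizes `m_b`), while `U_I` consists of arbitrary
entries above the diagonal blocks only. By the Fine–Herstein theorem an `m × m` matrix algebra over
`F_q` has `q^(m² - m)` nilpotent elements, so the product of the two counts is
`q^(2w + Σ (m_b² - m_b)) = q^(n² - n)`.

The Fine–Herstein count comes from a bijection `End V ≃ Nil(V) × V`. Both sides are fibred over
subspaces `A`: an endomorphism `f` over its eventual range `⨅ₖ range fᵏ`, a pair `(N, v)` over the
span of `v, N v, N² v, …`. Choosing a complement `C` of `A`, the fibre on the left is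
`Aut(A) × Nil(C) × Hom(C, A)` (Fitting decomposition) and the fibre on the right is
`{cyclic nilpotent pairs on A} × Nil(C) × Hom(C, A)`; automorphisms of `A` and cyclic nilpotent
pairs on `A` both correspond to bases of `A`.
-/

open Module Submodule LinearMap

namespace FineHerstein

section Blocks

variable {R V : Type*} [Ring R] [AddCommGroup V] [Module R V] {A C : Submodule R V}
  (hC : IsCompl A C)

noncomputable def blockA (f : Module.End R V) : Module.End R A :=
  A.projectionOnto C hC ∘ₗ f ∘ₗ A.subtype

noncomputable def blockC (f : Module.End R V) : Module.End R C :=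
  C.projectionOnto A hC.symm ∘ₗ f ∘ₗ C.subtype

noncomputable def blockAC (f : Module.End R V) : C →ₗ[R] A :=
  A.projectionOnto C hC ∘ₗ f ∘ₗ C.subtype

noncomputable def ofBlocks (g : Module.End R A) (h : Module.End R C) (φ : C →ₗ[R] A) :
    Module.End R V :=
  A.subtype ∘ₗ (g ∘ₗ A.projectionOnto C hC + φ ∘ₗ C.projectionOnto A hC.symm) +
    C.subtype ∘ₗ h ∘ₗ C.projectionOnto A hC.symm

variable {g : Module.End R A} {h : Module.End R C} {φ : C →ₗ[R] A} {f : Module.End R V}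

@[simp]
lemma ofBlocks_apply_left (a : A) : ofBlocks hC g h φ a = g a := by
  simp [ofBlocks]

@[simp]
lemma ofBlocks_apply_right (c : C) : ofBlocks hC g h φ c = φ c + h c := by
  simp [ofBlocks]

lemma mapsTo_ofBlocks : Set.MapsTo (ofBlocks hC g h φ) A A := fun x hx => by
  rw [show x = ((⟨x, hx⟩ : A) : V) from rfl, ofBlocks_apply_left]
  exact (g _).2

@[simp]
lemma blockA_ofBlocks : blockA hC (ofBlocks hC g h φ) = g := by
  ext a; simp [blockA]

@[simp]
lemma blockC_ofBlocks : blockC hC (ofBlocks hC g h φ) = h := by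
  ext c; simp [blockC]

@[simp]
lemma blockAC_ofBlocks : blockAC hC (ofBlocks hC g h φ) = φ := by
  ext c; simp [blockAC]

lemma comp_subtype_eq_subtype_comp_blockA (hf : Set.MapsTo f A A) :
    f ∘ₗ A.subtype = A.subtype ∘ₗ blockA hC f := by
  ext a; simp [blockA, projection_apply_of_mem_left hC (hf a.2)]

lemma blockC_comp_projectionOnto (hf : Set.MapsTo f A A) :
    blockC hC f ∘ₗ C.projectionOnto A hC.symm = C.projectionOnto A hC.symm ∘ₗ f := by
  ext x
  conv_rhs => rw [← projection_add_projection_eq_self hC x]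
  simp [blockC, projectionOnto_apply_of_mem_right hC.symm (hf (projection_apply_mem hC x))]

lemma ofBlocks_blocks (hf : Set.MapsTo f A A) :
    ofBlocks hC (blockA hC f) (blockC hC f) (blockAC hC f) = f := by
  ext x
  have hsplit := projection_add_projection_eq_self hC (f (C.projection A hC.symm x))
  conv_rhs => rw [← projection_add_projection_eq_self hC x, map_add, ← hsplit]
  simp [ofBlocks, blockA, blockC, blockAC, add_assoc,
    projection_apply_of_mem_left hC (hf (projection_apply_mem hC x))]

lemma coe_blockA_apply (hf : Set.MapsTo f A A) (a : A) : (blockA hC f a : V) = f a :=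
  (LinearMap.congr_fun (comp_subtype_eq_subtype_comp_blockA hC hf) a).symm

lemma coe_blockA_pow_apply (hf : Set.MapsTo f A A) (k : ℕ) (a : A) :
    ((blockA hC f ^ k) a : V) = (f ^ k) a :=
  (LinearMap.congr_fun (Module.End.commute_pow_left_of_commute
    (comp_subtype_eq_subtype_comp_blockA hC hf) k) a).symm

lemma blockC_pow_projectionOnto (hf : Set.MapsTo f A A) (k : ℕ) (x : V) :
    (blockC hC f ^ k) (C.projectionOnto A hC.symm x) = C.projectionOnto A hC.symm ((f ^ k) x) :=
  LinearMap.congr_fun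
    (Module.End.commute_pow_left_of_commute (blockC_comp_projectionOnto hC hf) k) x

lemma isNilpotent_iff_blocks (hf : Set.MapsTo f A A) :
    IsNilpotent f ↔ IsNilpotent (blockA hC f) ∧ IsNilpotent (blockC hC f) := by
  constructor
  · rintro ⟨k, hk⟩
    refine ⟨⟨k, ext fun a => Subtype.ext ?_⟩, ⟨k, ext fun c => ?_⟩⟩
    · simp [coe_blockA_pow_apply hC hf, hk]
    · simpa [hk] using blockC_pow_projectionOnto hC hf k c
  · rintro ⟨⟨s, hs⟩, ⟨t, ht⟩⟩
    refine ⟨s + t, ext fun x => ?_⟩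
    have hmem : (f ^ t) x ∈ A := by
      simpa [ht] using (blockC_pow_projectionOnto hC hf t x).symm
    simpa [pow_add, hs] using (coe_blockA_pow_apply hC hf s ⟨_, hmem⟩).symm

end Blocks

section Fitting

variable {F V : Type*} [Field F] [AddCommGroup V] [Module F V]
  {A C : Submodule F V} (hC : IsCompl A C) {f : Module.End F V}

lemma mapsTo_iInf_range_pow (f : Module.End F V) :
    Set.MapsTo f (⨅ m, range (f ^ m) : Submodule F V) (⨅ m, range (f ^ m) : Submodule F V) := by
  intro x hx
  simp only [SetLike.mem_coe, mem_iInf, mem_range] at hx ⊢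
  intro m
  obtain ⟨y, rfl⟩ := hx m
  exact ⟨f y, by rw [← Module.End.mul_apply, ← pow_succ, pow_succ', Module.End.mul_apply]⟩

lemma mapsTo_of_iInf_range_pow_eq (h : ⨅ m, range (f ^ m) = A) : Set.MapsTo f A A := by
  subst h; exact mapsTo_iInf_range_pow f

lemma iInf_range_pow_eq_iff [FiniteDimensional F V] (hf : Set.MapsTo f A A) :
    ⨅ m, range (f ^ m) = A ↔
      Function.Bijective (blockA hC f) ∧ IsNilpotent (blockC hC f) := by
  constructor
  · intro hA
    obtain ⟨n, hn⟩ := Filter.eventually_atTop.mp f.eventually_iInf_range_pow_eq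
    have hAn : ∀ m ≥ n, range (f ^ m) = A := fun m hm => (hn m hm).symm.trans hA
    have hsurj : Function.Surjective (blockA hC f) := by
      rintro ⟨_, ha⟩
      rw [← hAn (n + 1) n.le_succ] at ha
      obtain ⟨y, rfl⟩ := ha
      have hy : (f ^ n) y ∈ A := hAn n le_rfl ▸ mem_range_self _ y
      refine ⟨⟨_, hy⟩, Subtype.ext ?_⟩
      rw [coe_blockA_apply hC hf]
      simp only [pow_succ', Module.End.mul_apply]
    refine ⟨⟨LinearMap.injective_iff_surjective.mpr hsurj, hsurj⟩, n, ext fun c => ?_⟩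
    have hc : (f ^ n) c ∈ A := hAn n le_rfl ▸ mem_range_self _ (c : V)
    have := blockC_pow_projectionOnto hC hf n c
    rwa [projectionOnto_apply_left, projectionOnto_apply_of_mem_right hC.symm hc] at this
  · rintro ⟨hbij, k, hk⟩
    have range_le : range (f ^ k) ≤ A := by
      rintro _ ⟨x, rfl⟩
      simpa [hk] using (blockC_pow_projectionOnto hC hf k x).symm
    have le_range : ∀ m, A ≤ range (f ^ m) := fun m a ha => by
      obtain ⟨b, hb⟩ := (hbij.iterate m).2 ⟨a, ha⟩
      refine ⟨b, ?_⟩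
      rw [← coe_blockA_pow_apply hC hf, Module.End.pow_apply, hb]
    exact le_antisymm ((iInf_le _ k).trans range_le) (le_iInf le_range)

end Fitting

section Cyclic

variable {R V : Type*} [Ring R] [AddCommGroup V] [Module R V]

def iterateSpan (f : Module.End R V) (v : V) : Submodule R V :=
  span R (Set.range fun i : ℕ => (f ^ i) v)

lemma mem_iterateSpan_self (f : Module.End R V) (v : V) : v ∈ iterateSpan f v :=
  subset_span ⟨0, by simp⟩

lemma mapsTo_iterateSpan (f : Module.End R V) (v : V) :
    Set.MapsTo f (iterateSpan f v) (iterateSpan f v) := by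
  refine fun x hx => (span_le.mpr ?_ : iterateSpan f v ≤ (iterateSpan f v).comap f) hx
  rintro _ ⟨i, rfl⟩
  exact subset_span ⟨i + 1, by simp [pow_succ']⟩

lemma mem_of_iterateSpan_eq {A : Submodule R V} {f : Module.End R V} {v : V}
    (h : iterateSpan f v = A) : v ∈ A := by
  subst h; exact mem_iterateSpan_self f v

lemma mapsTo_of_iterateSpan_eq {A : Submodule R V} {f : Module.End R V} {v : V}
    (h : iterateSpan f v = A) : Set.MapsTo f A A := by
  subst h; exact mapsTo_iterateSpan f v

lemma iterateSpan_blockA_eq_top_iff {A C : Submodule R V} (hC : IsCompl A C)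
    {f : Module.End R V} (hf : Set.MapsTo f A A) (a : A) :
    iterateSpan (blockA hC f) a = ⊤ ↔ iterateSpan f a = A := by
  have hmap : (iterateSpan (blockA hC f) a).map A.subtype = iterateSpan f a := by
    rw [iterateSpan, Submodule.map_span, ← Set.range_comp]
    congr 2
    funext i
    exact coe_blockA_pow_apply hC hf i a
  rw [← hmap]
  exact (map_injective_of_injective A.injective_subtype).eq_iff.symm.trans
    (Eq.congr_right (map_subtype_top A))

end Cyclic

section Shift

variable {R W ι : Type*} [CommRing R] [AddCommGroup W] [Module R W]

noncomputable def bijectiveEquivBasis (b₀ : Basis ι R W) :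
    {g : Module.End R W // Function.Bijective g} ≃ Basis ι R W where
  toFun g := b₀.map (LinearEquiv.ofBijective g.1 g.2)
  invFun b := ⟨b₀.equiv b (Equiv.refl ι), (b₀.equiv b (Equiv.refl ι)).bijective⟩
  left_inv g := Subtype.ext (b₀.ext fun i => by simp)
  right_inv b := Basis.eq_of_apply_eq fun i => by simp

variable {d : ℕ}

noncomputable def basisShift (b : Basis (Fin d) R W) : Module.End R W :=
  b.constr R fun i => if h : (i : ℕ) + 1 < d then b ⟨i + 1, h⟩ else 0

/-- For `d = 0` the module is trivial and `0` is the only choice. -/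
noncomputable def basisHead (b : Basis (Fin d) R W) : W :=
  if h : 0 < d then b ⟨0, h⟩ else 0

lemma basisShift_apply (b : Basis (Fin d) R W) (i : Fin d) :
    basisShift b (b i) = if h : (i : ℕ) + 1 < d then b ⟨i + 1, h⟩ else 0 :=
  b.constr_basis R _ i

lemma basisShift_pow_apply (b : Basis (Fin d) R W) (k : ℕ) (i : Fin d) :
    (basisShift b ^ k) (b i) = if h : (i : ℕ) + k < d then b ⟨i + k, h⟩ else 0 := by
  induction k generalizing i with
  | zero => simp
  | succ k ih =>
    rw [pow_succ, Module.End.mul_apply, basisShift_apply]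
    by_cases h₁ : (i : ℕ) + 1 < d
    · rw [dif_pos h₁, ih]
      simp only [add_assoc, add_comm 1 k]
    · rw [dif_neg h₁, map_zero, dif_neg (by omega)]

lemma isNilpotent_basisShift (b : Basis (Fin d) R W) : IsNilpotent (basisShift b) :=
  ⟨d, b.ext fun i => by simp [basisShift_pow_apply]⟩

lemma basisShift_pow_basisHead (b : Basis (Fin d) R W) (i : Fin d) :
    (basisShift b ^ (i : ℕ)) (basisHead b) = b i := by
  simp [basisHead, i.pos, basisShift_pow_apply]

lemma iterateSpan_basisShift_basisHead (b : Basis (Fin d) R W) :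
    iterateSpan (basisShift b) (basisHead b) = ⊤ :=
  top_unique <| b.span_eq ▸
    span_mono (by rintro _ ⟨i, rfl⟩; exact ⟨i, basisShift_pow_basisHead b i⟩)

end Shift

section CyclicBasis

variable {F W : Type*} [Field F] [AddCommGroup W] [Module F W] [FiniteDimensional F W]

lemma pow_finrank_eq_zero {f : Module.End F W} (hf : IsNilpotent f) : f ^ finrank F W = 0 := by
  simpa [hf.charpoly_eq_X_pow_finrank] using f.aeval_self_charpoly

lemma iterateSpan_eq_span_fin {f : Module.End F W} (hf : IsNilpotent f) (v : W) :
    iterateSpan f v = span F (Set.range fun i : Fin (finrank F W) => (f ^ (i : ℕ)) v) := by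
  refine le_antisymm (span_le.mpr ?_) (span_mono ?_)
  · rintro _ ⟨i, rfl⟩
    by_cases hi : i < finrank F W
    · exact subset_span ⟨⟨i, hi⟩, rfl⟩
    · simp [Module.End.pow_map_zero_of_le (not_lt.mp hi)
        (LinearMap.congr_fun (pow_finrank_eq_zero hf) v)]
  · rintro _ ⟨i, rfl⟩
    exact ⟨i, rfl⟩

noncomputable def iterateBasis {f : Module.End F W} {v : W} (hf : IsNilpotent f)
    (hv : iterateSpan f v = ⊤) : Basis (Fin (finrank F W)) F W :=
  basisOfTopLeSpanOfCardEqFinrank (fun i => (f ^ (i : ℕ)) v)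
    (by rw [← iterateSpan_eq_span_fin hf, hv]) (Fintype.card_fin _)

@[simp]
lemma iterateBasis_apply {f : Module.End F W} {v : W} (hf : IsNilpotent f)
    (hv : iterateSpan f v = ⊤) (i : Fin (finrank F W)) :
    iterateBasis hf hv i = (f ^ (i : ℕ)) v := by
  simp [iterateBasis]

noncomputable def cyclicNilpotentEquivBasis :
    {x : Module.End F W × W // IsNilpotent x.1 ∧ iterateSpan x.1 x.2 = ⊤} ≃
      Basis (Fin (finrank F W)) F W where
  toFun x := iterateBasis x.2.1 x.2.2
  invFun b :=
    ⟨(basisShift b, basisHead b), isNilpotent_basisShift b, iterateSpan_basisShift_basisHead b⟩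
  left_inv := by
    rintro ⟨⟨f, v⟩, hf, hv⟩
    refine Subtype.ext (Prod.ext ((iterateBasis hf hv).ext fun i => ?_) ?_)
    · rw [basisShift_apply, iterateBasis_apply]
      split_ifs with h
      · simp [pow_succ']
      · rw [← Module.End.mul_apply, ← pow_succ', show (i : ℕ) + 1 = finrank F W by omega,
          pow_finrank_eq_zero hf, LinearMap.zero_apply]
    · show basisHead _ = v
      by_cases h : 0 < finrank F W
      · simp [basisHead, h]
      · have := finrank_zero_iff.mp (Nat.eq_zero_of_not_pos h)
        exact Subsingleton.elim _ _
  right_inv b := Basis.eq_of_apply_eq fun i => by simp [basisShift_pow_basisHead]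

variable (F W) in
noncomputable def bijectiveEquivCyclicNilpotent :
    {g : Module.End F W // Function.Bijective g} ≃
      {x : Module.End F W × W // IsNilpotent x.1 ∧ iterateSpan x.1 x.2 = ⊤} :=
  (bijectiveEquivBasis (Module.finBasis F W)).trans cyclicNilpotentEquivBasis.symm

end CyclicBasis

section Count

variable {F V : Type*} [Field F] [AddCommGroup V] [Module F V] [FiniteDimensional F V]
  {A C : Submodule F V}

noncomputable def fittingFiberEquiv (hC : IsCompl A C) :
    {f : Module.End F V // ⨅ m, range (f ^ m) = A} ≃
      {g : Module.End F A // Function.Bijective g} × {h : Module.End F C // IsNilpotent h} ×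
        (C →ₗ[F] A) where
  toFun f :=
    have hf : Set.MapsTo f.1 A A := mapsTo_of_iInf_range_pow_eq f.2
    have H := (iInf_range_pow_eq_iff hC hf).mp f.2
    (⟨blockA hC f, H.1⟩, ⟨blockC hC f, H.2⟩, blockAC hC f)
  invFun t := ⟨ofBlocks hC t.1 t.2.1 t.2.2,
    (iInf_range_pow_eq_iff hC (mapsTo_ofBlocks hC)).mpr (by simpa using ⟨t.1.2, t.2.1.2⟩)⟩
  left_inv f := Subtype.ext (ofBlocks_blocks hC (mapsTo_of_iInf_range_pow_eq f.2))
  right_inv t := by simp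

noncomputable def cyclicFiberEquiv (hC : IsCompl A C) :
    {x : {N : Module.End F V // IsNilpotent N} × V // iterateSpan x.1 x.2 = A} ≃
      {y : Module.End F A × A // IsNilpotent y.1 ∧ iterateSpan y.1 y.2 = ⊤} ×
        {h : Module.End F C // IsNilpotent h} × (C →ₗ[F] A) where
  toFun x :=
    have hf : Set.MapsTo x.1.1.1 A A := mapsTo_of_iterateSpan_eq x.2
    have hv : x.1.2 ∈ A := mem_of_iterateSpan_eq x.2
    have H := (isNilpotent_iff_blocks hC hf).mp x.1.1.2
    (⟨(blockA hC x.1.1, ⟨x.1.2, hv⟩), H.1, (iterateSpan_blockA_eq_top_iff hC hf _).mpr x.2⟩,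
      ⟨blockC hC x.1.1, H.2⟩, blockAC hC x.1.1)
  invFun t := ⟨(⟨ofBlocks hC t.1.1.1 t.2.1 t.2.2,
      (isNilpotent_iff_blocks hC (mapsTo_ofBlocks hC)).mpr
        (by simpa using ⟨t.1.2.1, t.2.1.2⟩)⟩,
      t.1.1.2),
    (iterateSpan_blockA_eq_top_iff hC (mapsTo_ofBlocks hC) t.1.1.2).mp (by simpa using t.1.2.2)⟩
  left_inv x := by
    have hf : Set.MapsTo x.1.1.1 A A := mapsTo_of_iterateSpan_eq x.2
    exact Subtype.ext (Prod.ext (Subtype.ext (ofBlocks_blocks hC hf)) rfl)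
  right_inv t := by simp

noncomputable def fiberEquiv (A : Submodule F V) :
    {f : Module.End F V // ⨅ m, range (f ^ m) = A} ≃
      {x : {N : Module.End F V // IsNilpotent N} × V // iterateSpan x.1 x.2 = A} :=
  have hC := (Submodule.exists_isCompl A).choose_spec
  (fittingFiberEquiv hC).trans <|
    ((bijectiveEquivCyclicNilpotent F A).prodCongr (Equiv.refl _)).trans (cyclicFiberEquiv hC).symm

variable (F V) in
noncomputable def endEquivNilpotentProd :
    Module.End F V ≃ {N : Module.End F V // IsNilpotent N} × V :=
  (Equiv.sigmaFiberEquiv fun f : Module.End F V => ⨅ m, range (f ^ m)).symm.trans <|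
    (Equiv.sigmaCongrRight fiberEquiv).trans <|
      Equiv.sigmaFiberEquiv fun x : {N // IsNilpotent N} × V => iterateSpan x.1.1 x.2

theorem card_isNilpotent_mul_card (F V : Type*) [Field F] [AddCommGroup V] [Module F V]
    [FiniteDimensional F V] :
    Nat.card {N : Module.End F V // IsNilpotent N} * Nat.card V = Nat.card (Module.End F V) := by
  rw [← Nat.card_prod, Nat.card_congr (endEquivNilpotentProd F V)]

theorem card_isNilpotent_matrix_mul (ι F : Type*) [Fintype ι] [DecidableEq ι] [Field F] :
    Nat.card {M : Matrix ι ι F // IsNilpotent M} * Nat.card F ^ Fintype.card ι =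
      Nat.card F ^ (Fintype.card ι * Fintype.card ι) := by
  let e := Matrix.toLinAlgEquiv' (R := F) (n := ι)
  have hnil :
      {M : Matrix ι ι F // IsNilpotent M} ≃ {N : Module.End F (ι → F) // IsNilpotent N} :=
    e.toEquiv.subtypeEquiv fun M => (IsNilpotent.map_iff e.injective).symm
  calc _ = Nat.card {N : Module.End F (ι → F) // IsNilpotent N} * Nat.card (ι → F) := by
        rw [Nat.card_congr hnil, Nat.card_fun, Nat.card_eq_fintype_card (α := ι)]
    _ = Nat.card (Matrix ι ι F) := by
        rw [card_isNilpotent_mul_card, Nat.card_congr e.toEquiv.symm]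
    _ = _ := by
        rw [Matrix, Nat.card_fun, Nat.card_fun, Nat.card_eq_fintype_card (α := ι), ← pow_mul]

end Count

end FineHerstein

open Matrix Finset

namespace SteinbergGL

section Unipotent

variable {R : Type*} [Ring R]

lemma isNilpotent_sub_one_iff {K : Type*} [Field K] [Algebra K R] (p : ℕ) [Fact p.Prime]
    [CharP K p] (x : R) : IsNilpotent (x - 1) ↔ ∃ m : ℕ, x ^ p ^ m = 1 := by
  rcases subsingleton_or_nontrivial R with hR | hR
  · exact iff_of_true ⟨0, Subsingleton.elim _ _⟩ ⟨0, Subsingleton.elim _ _⟩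
  have := charP_of_injective_algebraMap' K (A := R) p
  constructor
  · rintro ⟨N, hN⟩
    refine ⟨N, sub_eq_zero.mp ?_⟩
    rw [← one_pow (p ^ N), ← sub_pow_char_pow_of_commute p N (Commute.one_right x)]
    exact pow_eq_zero_of_le (Nat.lt_pow_self (Fact.out : p.Prime).one_lt).le hN
  · rintro ⟨m, hm⟩
    refine ⟨p ^ m, ?_⟩
    rw [sub_pow_char_pow_of_commute p m (Commute.one_right x), hm, one_pow, sub_self]

noncomputable def unitsSubtypeEquivOfUnipotent {S : R → Prop}
    (hS : ∀ x, S x → IsNilpotent (x - 1)) : {g : Rˣ // S g} ≃ {x : R // S x} where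
  toFun g := ⟨g.1, g.2⟩
  invFun x := ⟨(by simpa using (hS x.1 x.2).isUnit_one_add : IsUnit x.1).unit, x.2⟩
  left_inv g := Subtype.ext (Units.ext rfl)
  right_inv x := rfl

end Unipotent

section BlockTriangular

variable {ι α R : Type*} [LinearOrder α] (c : ι → α)

def IsBlockUnitriangular [DecidableEq ι] [Zero R] [One R] (M : Matrix ι ι R) : Prop :=
  M.BlockTriangular c ∧ ∀ i j, c i = c j → M i j = (1 : Matrix ι ι R) i j

variable {c} in
lemma IsBlockUnitriangular.toSquareBlock_eq_one [DecidableEq ι] [Zero R] [One R]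
    {M : Matrix ι ι R} (hM : IsBlockUnitriangular c M) (a : α) : M.toSquareBlock c a = 1 := by
  ext ⟨i, hi⟩ ⟨j, hj⟩
  simp [toSquareBlock, toSquareBlockProp, hM.2 i j (hi.trans hj.symm), one_apply]

abbrev Block (a : α) := {i : ι // c i = a}

abbrev AboveBlocks := {p : ι × ι // c p.1 < c p.2}

variable [Fintype ι]

abbrev blockIndices : Finset α := univ.image c

lemma sum_card_block : ∑ a ∈ blockIndices c, Fintype.card (Block c a) = Fintype.card ι := by
  simp [Fintype.card_subtype, ← card_eq_sum_card_image]

variable {c}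

def assembleBlocks [Zero R] (u : AboveBlocks c → R)
    (D : ∀ a : blockIndices c, Matrix (Block c a) (Block c a) R) : Matrix ι ι R :=
  fun i j =>
    if h : c i = c j then D ⟨c i, mem_image_of_mem c (mem_univ i)⟩ ⟨i, rfl⟩ ⟨j, h.symm⟩
    else if h' : c i < c j then u ⟨(i, j), h'⟩ else 0

variable [Zero R] {u : AboveBlocks c → R}
  {D : ∀ a : blockIndices c, Matrix (Block c a) (Block c a) R}

lemma assembleBlocks_apply_of_lt {i j : ι} (h : c i < c j) :
    assembleBlocks u D i j = u ⟨(i, j), h⟩ := by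
  simp [assembleBlocks, h.ne, h]

lemma blockTriangular_assembleBlocks : (assembleBlocks u D).BlockTriangular c := fun i j h => by
  simp [assembleBlocks, h.ne', h.not_gt]

lemma toSquareBlock_assembleBlocks (a : blockIndices c) :
    (assembleBlocks u D).toSquareBlock c a = D a := by
  obtain ⟨a, ha⟩ := a
  ext ⟨i, hi⟩ ⟨j, hj⟩
  dsimp only at hi hj
  subst hi
  simp [assembleBlocks, toSquareBlock, toSquareBlockProp, hj]

variable (c) in
def blockTriangularEquiv :
    {M : Matrix ι ι R // M.BlockTriangular c} ≃
      (AboveBlocks c → R) × ∀ a : blockIndices c, Matrix (Block c a) (Block c a) R where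
  toFun M := (fun p => M.1 p.1.1 p.1.2, fun a => M.1.toSquareBlock c a)
  invFun x := ⟨assembleBlocks x.1 x.2, blockTriangular_assembleBlocks⟩
  left_inv M := by
    ext i j
    rcases lt_trichotomy (c i) (c j) with h | h | h
    · simp [assembleBlocks_apply_of_lt h]
    · simp [assembleBlocks, h, toSquareBlock, toSquareBlockProp]
    · simp [assembleBlocks, h.ne', h.not_gt, M.2 h]
  right_inv x :=
    Prod.ext (funext fun p => assembleBlocks_apply_of_lt p.2) (funext toSquareBlock_assembleBlocks)

variable (c) in
def unitriangularEquiv [DecidableEq ι] [One R] :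
    {M : Matrix ι ι R // IsBlockUnitriangular c M} ≃ (AboveBlocks c → R) where
  toFun M := fun p => M.1 p.1.1 p.1.2
  invFun u := ⟨assembleBlocks u fun _ => 1, blockTriangular_assembleBlocks, fun i j h => by
    simp [assembleBlocks, h, one_apply]⟩
  left_inv M := by
    have hD : (fun a : blockIndices c => (1 : Matrix (Block c a) (Block c a) R)) =
        fun a : blockIndices c => M.1.toSquareBlock c a :=
      funext fun a => (M.2.toSquareBlock_eq_one a).symm
    refine Subtype.ext ?_
    dsimp only
    rw [hD]
    exact congrArg Subtype.val ((blockTriangularEquiv c).symm_apply_apply ⟨M.1, M.2.1⟩)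
  right_inv u := funext fun p => assembleBlocks_apply_of_lt (D := fun _ => 1) p.2

end BlockTriangular

section Nilpotent

open Polynomial

variable {ι α K : Type*} [Fintype ι] [DecidableEq ι] [LinearOrder α] [CommRing K] [IsDomain K]
  {c : ι → α}

lemma _root_.Matrix.isNilpotent_iff_charpoly (M : Matrix ι ι K) :
    IsNilpotent M ↔ M.charpoly = X ^ Fintype.card ι := by
  rw [← IsNilpotent.map_iff (Matrix.toLinAlgEquiv' (R := K) (n := ι)).injective,
    LinearMap.isNilpotent_iff_charpoly]
  change M.toLin'.charpoly = _ ↔ _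
  rw [Matrix.charpoly_toLin', Module.finrank_fintype_fun_eq_card]

lemma _root_.Matrix.BlockTriangular.isNilpotent_iff {M : Matrix ι ι K}
    (hM : M.BlockTriangular c) :
    IsNilpotent M ↔ ∀ a ∈ blockIndices c, IsNilpotent (M.toSquareBlock c a) := by
  simp only [Matrix.isNilpotent_iff_charpoly, hM.charpoly]
  constructor
  · intro h a ha
    have hdvd : (M.toSquareBlock c a).charpoly ∣ X ^ Fintype.card ι :=
      h ▸ dvd_prod_of_mem _ ha
    obtain ⟨k, -, hk⟩ := (dvd_prime_pow prime_X _).mp hdvd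
    have hX := eq_of_monic_of_associated (Matrix.charpoly_monic _) (monic_X_pow k) hk
    have hdeg := Matrix.charpoly_natDegree_eq_dim (M.toSquareBlock c a)
    rw [hX, natDegree_X_pow] at hdeg
    rwa [hdeg] at hX
  · intro h
    rw [prod_congr rfl h, prod_pow_eq_pow_sum, sum_card_block]

variable (c) in
noncomputable def nilpotentBlockTriangularEquiv :
    {M : Matrix ι ι K // M.BlockTriangular c ∧ IsNilpotent M} ≃
      (AboveBlocks c → K) ×
        ∀ a : blockIndices c, {N : Matrix (Block c a) (Block c a) K // IsNilpotent N} where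
  toFun M := (fun p => M.1 p.1.1 p.1.2,
    fun a => ⟨M.1.toSquareBlock c a, (M.2.1.isNilpotent_iff.mp M.2.2) a a.2⟩)
  invFun x := ⟨assembleBlocks x.1 fun a => (x.2 a).1, blockTriangular_assembleBlocks,
    blockTriangular_assembleBlocks.isNilpotent_iff.mpr fun a ha => by
      simpa [toSquareBlock_assembleBlocks ⟨a, ha⟩] using (x.2 ⟨a, ha⟩).2⟩
  left_inv M := by
    apply Subtype.ext
    exact (congrArg Subtype.val ((blockTriangularEquiv c).symm_apply_apply ⟨M.1, M.2.1⟩) :)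
  right_inv x :=
    Prod.ext (funext fun p => assembleBlocks_apply_of_lt (D := fun a => (x.2 a).1) p.2)
      (funext fun a => Subtype.ext (toSquareBlock_assembleBlocks (D := fun a => (x.2 a).1) a))

lemma IsBlockUnitriangular.isNilpotent_sub_one {M : Matrix ι ι K}
    (hM : IsBlockUnitriangular c M) : IsNilpotent (M - 1) := by
  refine (hM.1.sub blockTriangular_one).isNilpotent_iff.mpr fun a _ => ?_
  have h0 : (M - 1).toSquareBlock c a = 0 := by
    ext ⟨i, hi⟩ ⟨j, hj⟩
    simp [toSquareBlock, toSquareBlockProp, hM.2 i j (hi.trans hj.symm)]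
  exact h0 ▸ IsNilpotent.zero

end Nilpotent

section Count

variable {ι α : Type*} [Fintype ι] [LinearOrder α] (c : ι → α)

lemma card_mul_self_eq_two_mul_card_add_sum_sq :
    Fintype.card ι * Fintype.card ι =
      2 * Fintype.card (AboveBlocks c) +
        ∑ a ∈ blockIndices c, Fintype.card (Block c a) ^ 2 := by
  classical
  have hswap : #{p : ι × ι | c p.2 < c p.1} = Fintype.card (AboveBlocks c) := by
    rw [Fintype.card_subtype]
    exact card_equiv (Equiv.prodComm ι ι) (by simp)
  have hdiag :
      #{p : ι × ι | c p.1 = c p.2} = ∑ a ∈ blockIndices c, Fintype.card (Block c a) ^ 2 := by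
    rw [card_eq_sum_card_fiberwise (f := fun p : ι × ι => c p.1) (t := blockIndices c)
      (fun p _ => mem_image_of_mem c (mem_univ p.1))]
    refine sum_congr rfl fun a _ => ?_
    rw [Fintype.card_subtype, sq, ← card_product]
    congr 1
    ext p
    simp only [mem_filter, mem_univ, true_and, mem_product]
    constructor
    · rintro ⟨h, rfl⟩; exact ⟨rfl, h.symm⟩
    · rintro ⟨h1, h2⟩; exact ⟨h1.trans h2.symm, h1⟩
  have hsplit : #{p : ι × ι | ¬ c p.1 < c p.2} =
      #{p : ι × ι | c p.2 < c p.1} + #{p : ι × ι | c p.1 = c p.2} := by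
    rw [← card_union_of_disjoint (disjoint_filter.mpr fun p _ h h' => h.ne' h'), ← filter_or]
    congr 1
    ext p
    simp [le_iff_lt_or_eq, eq_comm]
  rw [← Fintype.card_prod, ← card_univ, ← card_filter_add_card_filter_not
    (s := univ) (fun p : ι × ι => c p.1 < c p.2), hsplit, hswap, hdiag, ← Fintype.card_subtype]
  ring

variable {K : Type*} [DecidableEq ι] [Field K]

theorem card_nilpotent_mul_card_unitriangular_mul :
    Nat.card {M : Matrix ι ι K // M.BlockTriangular c ∧ IsNilpotent M} *
      Nat.card {M : Matrix ι ι K // IsBlockUnitriangular c M} * Nat.card K ^ Fintype.card ι =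
      Nat.card K ^ (Fintype.card ι * Fintype.card ι) := by
  set q := Nat.card K
  set w := Fintype.card (AboveBlocks c)
  set m := fun a => Fintype.card (Block c a)
  set t := fun a : α => Nat.card {N : Matrix (Block c a) (Block c a) K // IsNilpotent N}
  have hblock : ∀ a, t a * q ^ m a = q ^ (m a ^ 2) := fun a => by
    rw [sq]; exact FineHerstein.card_isNilpotent_matrix_mul _ K
  rw [Nat.card_congr (nilpotentBlockTriangularEquiv c), Nat.card_congr (unitriangularEquiv c),
    Nat.card_prod, Nat.card_fun, Nat.card_pi, Nat.card_eq_fintype_card (α := AboveBlocks c),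
    prod_coe_sort (blockIndices c) t, card_mul_self_eq_two_mul_card_add_sum_sq c,
    ← sum_card_block c, ← prod_pow_eq_pow_sum]
  calc q ^ w * (∏ a ∈ blockIndices c, t a) * q ^ w * ∏ a ∈ blockIndices c, q ^ m a
      = q ^ w * q ^ w * ∏ a ∈ blockIndices c, t a * q ^ m a := by rw [prod_mul_distrib]; ring
    _ = q ^ (2 * w + ∑ a ∈ blockIndices c, m a ^ 2) := by
      rw [prod_congr rfl fun a _ => hblock a, prod_pow_eq_pow_sum]; ring

end Count

section Parabolic

open ParabolicGL

variable (n : ℕ) (I : Finset (Fin (n - 1)))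

def wallsBelow (i : Fin n) : Finset (Fin (n - 1)) := {k | k ∉ I ∧ (k : ℕ) < i}

def blockIndex (i : Fin n) : ℕ := #(wallsBelow n I i)

lemma wallsBelow_mono : Monotone (wallsBelow n I) := fun _ _ hij k => by
  simp only [wallsBelow, mem_filter, mem_univ, true_and]
  exact fun h => ⟨h.1, h.2.trans_le hij⟩

lemma blockIndex_mono : Monotone (blockIndex n I) := fun _ _ hij =>
  card_le_card (wallsBelow_mono n I hij)

variable {n I}

lemma blockIndex_lt_blockIndex_iff {i j : Fin n} (hij : i ≤ j) :
    blockIndex n I i < blockIndex n I j ↔ ∃ k ∉ I, (i : ℕ) ≤ k ∧ (k : ℕ) < j := by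
  constructor
  · intro hlt
    by_contra! hno
    refine (card_le_card fun k => ?_).not_gt hlt
    simp only [wallsBelow, mem_filter, mem_univ, true_and]
    exact fun h => ⟨h.1, lt_of_not_ge fun hik => (hno k h.1 hik).not_gt h.2⟩
  · rintro ⟨k, hkI, hik, hkj⟩
    exact card_lt_card ((ssubset_iff_of_subset (wallsBelow_mono n I hij)).mpr
      ⟨k, by simp [wallsBelow, hkI, hkj], by simp [wallsBelow, hkI, hik]⟩)

lemma separated_iff_blockIndex_ne (i j : Fin n) :
    Separated n I i j ↔ blockIndex n I i ≠ blockIndex n I j := by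
  wlog hij : i ≤ j generalizing i j
  · rw [Separated, min_comm, max_comm, ← Separated, ne_comm]
    exact this j i (le_of_not_ge hij)
  have hij' : (i : ℕ) ≤ j := hij
  rw [Separated, min_eq_left hij', max_eq_right hij', ← blockIndex_lt_blockIndex_iff hij,
    (blockIndex_mono n I hij).lt_iff_ne]

lemma blockIndex_lt_blockIndex_iff_separated (i j : Fin n) :
    blockIndex n I j < blockIndex n I i ↔ j < i ∧ Separated n I i j := by
  rw [separated_iff_blockIndex_ne]
  constructor
  · intro h
    exact ⟨lt_of_not_ge fun hij => (blockIndex_mono n I hij).not_gt h, h.ne'⟩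
  · rintro ⟨hji, hne⟩
    exact (blockIndex_mono n I hji.le).lt_of_ne hne.symm

variable {K : Type*} [Field K]

lemma mem_P_iff (g : Matrix.GeneralLinearGroup (Fin n) K) :
    g ∈ P n I ↔ (g : Matrix (Fin n) (Fin n) K).BlockTriangular (blockIndex n I) := by
  simp only [P, Set.mem_ofPred_eq, Matrix.BlockTriangular, blockIndex_lt_blockIndex_iff_separated,
    and_imp]

lemma mem_U_iff (g : Matrix.GeneralLinearGroup (Fin n) K) :
    g ∈ U n I ↔ IsBlockUnitriangular (blockIndex n I) (g : Matrix (Fin n) (Fin n) K) := by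
  simp only [U, IsBlockUnitriangular, Set.mem_ofPred_eq, mem_P_iff, separated_iff_blockIndex_ne,
    not_not, Matrix.one_apply]

variable (n I) in
noncomputable def pSingularEquiv (p : ℕ) [Fact p.Prime] [CharP K p] :
    {g : Matrix.GeneralLinearGroup (Fin n) K // g ∈ P n I ∧ ∃ k : ℕ, orderOf g = p ^ k} ≃
      {M : Matrix (Fin n) (Fin n) K // M.BlockTriangular (blockIndex n I) ∧ IsNilpotent M} :=
  (Equiv.subtypeEquivRight fun g => by
      rw [mem_P_iff, exists_orderOf_eq_prime_pow_iff, isNilpotent_sub_one_iff (K := K) p]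
      simp [Units.ext_iff]).trans <|
    (unitsSubtypeEquivOfUnipotent (S := fun M : Matrix (Fin n) (Fin n) K =>
      M.BlockTriangular (blockIndex n I) ∧ IsNilpotent (M - 1)) fun _ h => h.2).trans <|
      (Equiv.subRight 1).subtypeEquiv fun M =>
        ⟨fun h => ⟨h.1.sub blockTriangular_one, h.2⟩,
          fun h => ⟨by simpa using h.1.add blockTriangular_one, h.2⟩⟩

variable (n I) in
noncomputable def unipotentRadicalEquiv :
    U n I (F := K) ≃
      {M : Matrix (Fin n) (Fin n) K // IsBlockUnitriangular (blockIndex n I) M} :=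
  (Equiv.subtypeEquivRight mem_U_iff).trans
    (unitsSubtypeEquivOfUnipotent (S := IsBlockUnitriangular (blockIndex n I)) fun _ h =>
      h.isNilpotent_sub_one)

variable (n I) in
theorem card_pSingular_mul_card_U [Finite K] (p : ℕ) [Fact p.Prime] [CharP K p] :
    Nat.card {g : Matrix.GeneralLinearGroup (Fin n) K //
        g ∈ P n I ∧ ∃ k : ℕ, orderOf g = p ^ k} * Nat.card (U n I (F := K)) =
      Nat.card K ^ (n * (n - 1)) := by
  have h := card_nilpotent_mul_card_unitriangular_mul (K := K) (blockIndex n I)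
  rw [Fintype.card_fin, ← Nat.card_congr (pSingularEquiv n I p),
    ← Nat.card_congr (unipotentRadicalEquiv n I)] at h
  refine Nat.eq_of_mul_eq_mul_right (pow_pos (Nat.card_pos (α := K)) n) ?_
  rw [h, ← pow_add]
  cases n with
  | zero => rfl
  | succ k => rw [Nat.add_sub_cancel, ← Nat.mul_succ]

end Parabolic

end SteinbergGL

open ParabolicGL

/-- **Generalized Steinberg theorem for `GL(n, F_q)`**, `q = p^e`: for any standard
parabolic subgroup `P_I` of `K = GL(n, F_q)`, the number of `p`-singular elements of
`P_I` times the order of its unipotent radical `O_p(P_I) = U_I` equals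
`|K|_p² = q^(n(n-1))`. -/
theorem generalized_steinberg_GL (p e n : ℕ) [Fact p.Prime] (he : 0 < e)
    (I : Finset (Fin (n - 1))) :
    Nat.card {g : Matrix.GeneralLinearGroup (Fin n) (GaloisField p e) |
        g ∈ P n I ∧ ∃ k : ℕ, orderOf g = p ^ k} *
      Nat.card (U n I (F := GaloisField p e)) =
      (p ^ e) ^ (n * (n - 1)) := by
  rw [← GaloisField.card p e he.ne']
  exact SteinbergGL.card_pSingular_mul_card_U n I p
end
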